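/- arXiv:1511.02818 — 2 statements merged into one kernel-verified Lean document; each statement's English description precedes it below -/
import Mathlib

section
/- Let ν > 0 and let (ξ₀, ζ₀) be a bounded solution on ℝ of the system ξ₀′ − ζ₀ = g₀⁽¹⁾, ζ₀′ + ν ξ₀ = g₀⁽²⁾ with ξ₀′ and ζ₀′ also bounded and g₀⁽¹⁾, g₀⁽²⁾ continuous. Then for every θ ∈ (0, 1/4] and q₀ ∈ ℝ the inequality ‖ζ₀‖²_{θ,q₀} ≤ C₁ [ ‖ξ₀‖²_{θ,q₀} + ‖g₀⁽¹⁾‖²_{θ,q₀} + ‖g₀⁽²⁾‖²_{θ,q₀} ] holds, where the positive constant C₁ depends only on an upper bound for ν (in the paper's application ν = |μ₀| and C₁ depends only on ω₀). -/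
noncomputable section
open MeasureTheory Set Filter Topology

namespace BL

/-- Ω(τ) = ∫₀^τ ω(t) dt. -/
def Om (ω : ℝ → ℝ) (τ : ℝ) : ℝ := ∫ t in (0:ℝ)..τ, ω t

/-- ω₀ = max of |ω| on [0,1]. -/
def om0 (ω : ℝ → ℝ) : ℝ := sSup ((fun t => |ω t|) '' Icc (0:ℝ) 1)

/-- λ₀ = √(2 max_{[0,1]} Ω). -/
def lam0 (ω : ℝ → ℝ) : ℝ := Real.sqrt (2 * sSup (Om ω '' Icc (0:ℝ) 1))

/-- H_p(p; λ) = (λ² − 2Ω(p))^{-1/2}. -/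
def Hp (ω : ℝ → ℝ) (lam p : ℝ) : ℝ := (Real.sqrt (lam ^ 2 - 2 * Om ω p))⁻¹

/-- H(p, λ) = ∫₀^p (λ² − 2Ω(τ))^{-1/2} dτ (the stream solution in hodograph variables). -/
def Hs (ω : ℝ → ℝ) (lam p : ℝ) : ℝ := ∫ τ in (0:ℝ)..p, Hp ω lam τ

/-- the depth d(λ). -/
def dep (ω : ℝ → ℝ) (lam : ℝ) : ℝ := Hs ω lam 1

/-- 𝓡(λ) = (λ² − 2Ω(1) + 2 d(λ))/3. -/
def RR (ω : ℝ → ℝ) (lam : ℝ) : ℝ := (lam ^ 2 - 2 * Om ω 1 + 2 * dep ω lam) / 3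

/-- λ_c is the unique minimiser of 𝓡 on (λ₀, ∞) and r_c = 𝓡(λ_c) the critical value. -/
structure Crit (ω : ℝ → ℝ) (lamc rc : ℝ) : Prop where
  lt : lam0 ω < lamc
  isMin : ∀ lam, lam0 ω < lam → RR ω lamc ≤ RR ω lam
  uniq : ∀ lam, lam0 ω < lam → RR ω lam = RR ω lamc → lam = lamc
  val : rc = RR ω lamc

/-- The fluid domain D = {0 < y < η(x)}. -/
def dom (η : ℝ → ℝ) : Set (ℝ × ℝ) := {z : ℝ × ℝ | 0 < z.2 ∧ z.2 < η z.1}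

/-- Its closure D̄ = {0 ≤ y ≤ η(x)}. -/
def domc (η : ℝ → ℝ) : Set (ℝ × ℝ) := {z : ℝ × ℝ | 0 ≤ z.2 ∧ z.2 ≤ η z.1}

/-- ψ_x (partial derivative within D̄). -/
def px (η : ℝ → ℝ) (ψ : ℝ × ℝ → ℝ) (z : ℝ × ℝ) : ℝ :=
  fderivWithin ℝ ψ (domc η) z (1, 0)

/-- ψ_y (partial derivative within D̄). -/
def py (η : ℝ → ℝ) (ψ : ℝ × ℝ → ℝ) (z : ℝ × ℝ) : ℝ :=
  fderivWithin ℝ ψ (domc η) z (0, 1)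

/-- A solution of problem P^M_r. -/
structure Sol (ω : ℝ → ℝ) (M r : ℝ) (ψ : ℝ × ℝ → ℝ) (η : ℝ → ℝ) : Prop where
  eta_pos : ∀ x, 0 < η x
  eta_lip : LipschitzWith (Real.toNNReal M) η
  smooth : ContDiffOn ℝ 1 ψ (domc η)
  bottom : ∀ x, ψ (x, 0) = 0
  surface : ∀ x, ψ (x, η x) = 1
  bern : ∀ x, px η ψ (x, η x) ^ 2 + py η ψ (x, η x) ^ 2 + 2 * η x = 3 * r
  unidir : ∀ z ∈ domc η, 0 < py η ψ z
  weak : ∀ φ : ℝ × ℝ → ℝ, ContDiff ℝ (⊤ : ℕ∞) φ → HasCompactSupport φ →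
      tsupport φ ⊆ dom η →
      (∫ z in dom η,
        (px η ψ z * fderiv ℝ φ z (1, 0) + py η ψ z * fderiv ℝ φ z (0, 1))) =
      ∫ z in dom η, ω (ψ z) * φ z

/-- Stream (shear-flow) solutions: η is constant and ψ depends only on y. -/
def IsStream (ψ : ℝ × ℝ → ℝ) (η : ℝ → ℝ) : Prop :=
  (∃ c : ℝ, ∀ x, η x = c) ∧ ∃ u : ℝ → ℝ, ∀ z : ℝ × ℝ, ψ z = u z.2

/-- Stokes-wave solutions: periodic, a single crest per wavelength, symmetric about crests. -/
def IsStokes (ψ : ℝ × ℝ → ℝ) (η : ℝ → ℝ) : Prop :=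
  ∃ L : ℝ, 0 < L ∧ (∀ x, η (x + L) = η x) ∧ (∀ z : ℝ × ℝ, ψ (z.1 + L, z.2) = ψ z) ∧
    ∃ xc : ℝ, (∀ x, η (xc + x) = η (xc - x)) ∧ (∀ x, η x ≤ η xc) ∧
      StrictAntiOn η (Icc xc (xc + L / 2))

/-- Solitary-wave solutions: non-stream, symmetric about the line through the single
crest, asymptoting a stream solution at infinity. -/
def IsSolitary (ω : ℝ → ℝ) (M r : ℝ) (ψ : ℝ × ℝ → ℝ) (η : ℝ → ℝ) : Prop :=
  ¬ IsStream ψ η ∧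
  (∃ xc : ℝ, (∀ x, η (xc + x) = η (xc - x)) ∧ ∀ x, η x ≤ η xc) ∧
  ∃ (u : ℝ → ℝ) (c : ℝ), Sol ω M r (fun z => u z.2) (fun _ => c) ∧
    Tendsto η atTop (𝓝 c) ∧ Tendsto η atBot (𝓝 c) ∧
    ∀ y : ℝ, Tendsto (fun x => ψ (x, y)) atTop (𝓝 (u y)) ∧
      Tendsto (fun x => ψ (x, y)) atBot (𝓝 (u y))

/-- h is the partial hodograph transform of (ψ, η):  ψ(q, h(q,p)) = p. -/
def Hodo (ψ : ℝ × ℝ → ℝ) (η : ℝ → ℝ) (h : ℝ → ℝ → ℝ) : Prop :=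
  ∀ q : ℝ, ∀ p ∈ Icc (0:ℝ) 1, 0 ≤ h q p ∧ h q p ≤ η q ∧ ψ (q, h q p) = p

/-- h_q. -/
def hQ (h : ℝ → ℝ → ℝ) (q p : ℝ) : ℝ := deriv (fun q' => h q' p) q

/-- h_p. -/
def hP (h : ℝ → ℝ → ℝ) (q p : ℝ) : ℝ := deriv (fun p' => h q p') p

/-- The flow force invariant s(ψ, η) evaluated at the abscissa x. -/
def fForce (ω : ℝ → ℝ) (r : ℝ) (ψ : ℝ × ℝ → ℝ) (η : ℝ → ℝ) (x : ℝ) : ℝ :=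
  (r + 2 / 3 * Om ω 1) * η x -
    1 / 3 * (η x ^ 2 -
      ∫ y in (0:ℝ)..η x,
        (py η ψ (x, y) ^ 2 - px η ψ (x, y) ^ 2 - 2 * Om ω (ψ (x, y))))

/-- The flow force of the stream solution with parameter λ. -/
def sStream (ω : ℝ → ℝ) (r lam : ℝ) : ℝ :=
  (r + 2 / 3 * Om ω 1) * dep ω lam -
    1 / 3 * (dep ω lam ^ 2 -
      ∫ p in (0:ℝ)..1, ((Hp ω lam p)⁻¹ - 2 * Om ω p * Hp ω lam p))

/-- (μ, φ) is an eigenpair of the Sturm–Liouville problem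
−(H_p^{−3} φ′)′ = μ H_p^{−1} φ, φ(0) = 0, φ′(1) = H_p³(1) φ(1). -/
def EigenPair (ω : ℝ → ℝ) (lam μ : ℝ) (φ φ' : ℝ → ℝ) : Prop :=
  (∃ p ∈ Icc (0:ℝ) 1, φ p ≠ 0) ∧
  (∀ p ∈ Icc (0:ℝ) 1, HasDerivWithinAt φ (φ' p) (Icc (0:ℝ) 1) p) ∧
  (∀ p ∈ Icc (0:ℝ) 1,
    HasDerivWithinAt (fun t => (Hp ω lam t)⁻¹ ^ 3 * φ' t)
      (-(μ * (Hp ω lam p)⁻¹ * φ p)) (Icc (0:ℝ) 1) p) ∧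
  φ 0 = 0 ∧ φ' 1 = Hp ω lam 1 ^ 3 * φ 1

def IsEigen (ω : ℝ → ℝ) (lam μ : ℝ) : Prop := ∃ φ φ', EigenPair ω lam μ φ φ'

/-- μ0 is the least eigenvalue, with eigenfunction φ0. -/
def Ground (ω : ℝ → ℝ) (lam μ0 : ℝ) (φ0 φ0' : ℝ → ℝ) : Prop :=
  IsLeast {μ : ℝ | IsEigen ω lam μ} μ0 ∧ EigenPair ω lam μ0 φ0 φ0'

/-- Normalisation ∫₀¹ φ0² H_p^{-1} dp = 1. -/
def Normalized (ω : ℝ → ℝ) (lam : ℝ) (φ0 : ℝ → ℝ) : Prop :=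
  (∫ p in (0:ℝ)..1, φ0 p ^ 2 * (Hp ω lam p)⁻¹) = 1

/-- Weighted norm squared ‖u‖²_{θ,q₀} for functions on ℝ. -/
def wn1 (θ q0 : ℝ) (u : ℝ → ℝ) : ℝ :=
  ∫ q : ℝ, u q ^ 2 * Real.exp (-θ * |q - q0|)

/-- Weighted norm squared ‖u‖²_{θ,q₀} for functions on S = ℝ × (0,1). -/
def wn2 (θ q0 : ℝ) (u : ℝ → ℝ → ℝ) : ℝ :=
  ∫ q : ℝ, (∫ p in (0:ℝ)..1, u q p ^ 2) * Real.exp (-θ * |q - q0|)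

/-- The closed strip S̄ = ℝ × [0,1]. -/
def Sbar : Set (ℝ × ℝ) := (univ : Set ℝ) ×ˢ Icc (0:ℝ) 1

/-- a bounds the C²(S̄)-norm of u. -/
def C2Bound (u : ℝ × ℝ → ℝ) (a : ℝ) : Prop :=
  ∀ z ∈ Sbar, ∀ n : ℕ, n ≤ 2 → ‖iteratedFDerivWithin ℝ n u Sbar z‖ ≤ a

/-- a bounds the C¹(S̄)-norm of u. -/
def C1Bound (u : ℝ × ℝ → ℝ) (a : ℝ) : Prop :=
  ∀ z ∈ Sbar, ∀ n : ℕ, n ≤ 1 → ‖iteratedFDerivWithin ℝ n u Sbar z‖ ≤ a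

/-- ξ₀(q) = ∫₀¹ ξ(q,p) φ₀(p) H_p^{-1}(p) dp, the fundamental-mode projection. -/
def xiProj (ω : ℝ → ℝ) (lam : ℝ) (φ0 : ℝ → ℝ) (ξ : ℝ → ℝ → ℝ) (q : ℝ) : ℝ :=
  ∫ p in (0:ℝ)..1, ξ q p * φ0 p * (Hp ω lam p)⁻¹

/-- ζ₀(q) = ∫₀¹ ζ(q,p) φ₀(p) dp. -/
def zetaProj (φ0 : ℝ → ℝ) (ζ : ℝ → ℝ → ℝ) (q : ℝ) : ℝ :=
  ∫ p in (0:ℝ)..1, ζ q p * φ0 p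

lemma integrable_exp_neg_abs' {θ : ℝ} (hθ : 0 < θ) :
    Integrable (fun q : ℝ => Real.exp (-θ * |q|)) := by
  have hIoi : IntegrableOn (fun q : ℝ => Real.exp (-θ * |q|)) (Ioi 0) := by
    refine (exp_neg_integrableOn_Ioi 0 hθ).congr_fun (fun q hq => ?_) measurableSet_Ioi
    rw [abs_of_pos hq.out]
  have hIci : IntegrableOn (fun q : ℝ => Real.exp (-θ * |q|)) (Ici 0) := by
    rw [integrableOn_Ici_iff_integrableOn_Ioi]; exact hIoi
  rw [← integrableOn_univ, ← Iic_union_Ioi (a := (0:ℝ)), integrableOn_union]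
  refine ⟨?_, hIoi⟩
  rw [← (Measure.measurePreserving_neg (volume : Measure ℝ)).integrableOn_comp_preimage
      (Homeomorph.neg ℝ).measurableEmbedding]
  simpa [Function.comp_def, neg_preimage, neg_Iic, neg_zero] using hIci

lemma integrable_w {θ : ℝ} (hθ : 0 < θ) (q0 : ℝ) :
    Integrable (fun q : ℝ => Real.exp (-θ * |q - q0|)) :=
  (integrable_exp_neg_abs' hθ).comp_sub_right q0

lemma continuous_w (θ q0 : ℝ) : Continuous (fun q : ℝ => Real.exp (-θ * |q - q0|)) :=
  (Real.continuous_exp.comp (continuous_const.mul ((continuous_id.sub continuous_const).abs)))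

lemma intW {θ q0 : ℝ} (hθ : 0 < θ) {f : ℝ → ℝ} {C : ℝ} (hf : Continuous f)
    (hC : ∀ q, |f q| ≤ C) :
    Integrable (fun q : ℝ => f q * Real.exp (-θ * |q - q0|)) := by
  refine ((integrable_w hθ q0).const_mul C).mono'
    ((hf.mul (continuous_w θ q0)).aestronglyMeasurable) ?_
  filter_upwards with q
  have h1 : (0:ℝ) < Real.exp (-θ * |q - q0|) := Real.exp_pos _
  have := hC q
  rw [Real.norm_eq_abs, abs_mul, abs_of_pos h1]
  exact mul_le_mul_of_nonneg_right this h1.le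

set_option maxHeartbeats 1000000 in
lemma key_est (N : ℝ) (hN : 0 < N) (ν : ℝ) (hν : 0 < ν) (hνN : ν ≤ N)
    (ξ0 ζ0 ξ0' ζ0' g1 g2 : ℝ → ℝ)
    (hξ : ∀ q : ℝ, HasDerivAt ξ0 (ξ0' q) q)
    (hζ : ∀ q : ℝ, HasDerivAt ζ0 (ζ0' q) q)
    (B : ℝ) (hB : ∀ q : ℝ, |ξ0 q| ≤ B ∧ |ζ0 q| ≤ B ∧ |ξ0' q| ≤ B ∧ |ζ0' q| ≤ B)
    (hg1c : Continuous g1) (hg2c : Continuous g2)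
    (he1 : ∀ q : ℝ, ξ0' q - ζ0 q = g1 q)
    (he2 : ∀ q : ℝ, ζ0' q + ν * ξ0 q = g2 q)
    (θ : ℝ) (hθ : 0 < θ) (hθ4 : θ ≤ 1 / 4) (q0 : ℝ) :
    (∫ q : ℝ, ζ0 q ^ 2 * Real.exp (-θ * |q - q0|)) ≤
      (2 * N + 2) * ((∫ q : ℝ, ξ0 q ^ 2 * Real.exp (-θ * |q - q0|)) +
        (∫ q : ℝ, g1 q ^ 2 * Real.exp (-θ * |q - q0|)) +
        (∫ q : ℝ, g2 q ^ 2 * Real.exp (-θ * |q - q0|))) := by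
  have hB0 : 0 ≤ B := le_trans (abs_nonneg _) (hB 0).1
  have cξ : Continuous ξ0 := by
    have h : Differentiable ℝ ξ0 := fun q => (hξ q).differentiableAt
    exact h.continuous
  have cζ : Continuous ζ0 := by
    have h : Differentiable ℝ ζ0 := fun q => (hζ q).differentiableAt
    exact h.continuous
  have eξ' : ∀ q, ξ0' q = ζ0 q + g1 q := fun q => by linarith [he1 q]
  have eζ' : ∀ q, ζ0' q = g2 q - ν * ξ0 q := fun q => by linarith [he2 q]
  have cξ' : Continuous ξ0' := by
    have h : ξ0' = fun q => ζ0 q + g1 q := funext eξ'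
    rw [h]; exact cζ.add hg1c
  have cζ' : Continuous ζ0' := by
    have h : ζ0' = fun q => g2 q - ν * ξ0 q := funext eζ'
    rw [h]; exact hg2c.sub (continuous_const.mul cξ)
  have hg1b : ∀ q, |g1 q| ≤ 2 * B := by
    intro q
    rw [← he1 q]
    calc |ξ0' q - ζ0 q| ≤ |ξ0' q| + |ζ0 q| := abs_sub _ _
      _ ≤ 2 * B := by obtain ⟨_, h2, h3, _⟩ := hB q; linarith
  have hg2b : ∀ q, |g2 q| ≤ (1 + N) * B := by
    intro q
    rw [← he2 q]
    calc |ζ0' q + ν * ξ0 q| ≤ |ζ0' q| + |ν * ξ0 q| := abs_add_le _ _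
      _ ≤ (1 + N) * B := by
        obtain ⟨h1, _, _, h4⟩ := hB q
        rw [abs_mul, abs_of_pos hν]
        nlinarith [abs_nonneg (ξ0 q)]
  -- integrability facts
  have iZ : Integrable (fun q : ℝ => ζ0 q ^ 2 * Real.exp (-θ * |q - q0|)) := by
    refine intW hθ (cζ.pow 2) (C := B ^ 2) (fun q => ?_)
    rw [abs_of_nonneg (sq_nonneg _)]
    nlinarith [(hB q).2.1, abs_nonneg (ζ0 q), sq_abs (ζ0 q)]
  have iX : Integrable (fun q : ℝ => ξ0 q ^ 2 * Real.exp (-θ * |q - q0|)) := by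
    refine intW hθ (cξ.pow 2) (C := B ^ 2) (fun q => ?_)
    rw [abs_of_nonneg (sq_nonneg _)]
    nlinarith [(hB q).1, abs_nonneg (ξ0 q), sq_abs (ξ0 q)]
  have iG1 : Integrable (fun q : ℝ => g1 q ^ 2 * Real.exp (-θ * |q - q0|)) := by
    refine intW hθ (hg1c.pow 2) (C := (2 * B) ^ 2) (fun q => ?_)
    rw [abs_of_nonneg (sq_nonneg _)]
    nlinarith [hg1b q, abs_nonneg (g1 q), sq_abs (g1 q)]
  have iG2 : Integrable (fun q : ℝ => g2 q ^ 2 * Real.exp (-θ * |q - q0|)) := by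
    refine intW hθ (hg2c.pow 2) (C := ((1 + N) * B) ^ 2) (fun q => ?_)
    rw [abs_of_nonneg (sq_nonneg _)]
    nlinarith [hg2b q, abs_nonneg (g2 q), sq_abs (g2 q)]
  have iA1 : Integrable (fun q : ℝ => (g1 q * ζ0 q) * Real.exp (-θ * |q - q0|)) := by
    refine intW hθ (hg1c.mul cζ) (C := (2 * B) * B) (fun q => ?_)
    rw [abs_mul]
    exact mul_le_mul (hg1b q) (hB q).2.1 (abs_nonneg _) (by linarith)
  have iA2 : Integrable (fun q : ℝ => (g2 q * ξ0 q) * Real.exp (-θ * |q - q0|)) := by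
    refine intW hθ (hg2c.mul cξ) (C := ((1 + N) * B) * B) (fun q => ?_)
    rw [abs_mul]
    exact mul_le_mul (hg2b q) (hB q).1 (abs_nonneg _) (by nlinarith)
  have iR : Integrable (fun q : ℝ => (ξ0 q * ζ0 q) * Real.exp (-θ * |q - q0|)) := by
    refine intW hθ (cξ.mul cζ) (C := B * B) (fun q => ?_)
    rw [abs_mul]
    exact mul_le_mul (hB q).1 (hB q).2.1 (abs_nonneg _) hB0
  have iRabs : Integrable (fun q : ℝ => |ξ0 q * ζ0 q| * Real.exp (-θ * |q - q0|)) := by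
    refine intW hθ (cξ.mul cζ).abs (C := B * B) (fun q => ?_)
    rw [abs_abs, abs_mul]
    exact mul_le_mul (hB q).1 (hB q).2.1 (abs_nonneg _) hB0
  have iW1 : Integrable (fun q : ℝ => |g1 q * ζ0 q| * Real.exp (-θ * |q - q0|)) := by
    refine intW hθ (hg1c.mul cζ).abs (C := (2 * B) * B) (fun q => ?_)
    rw [abs_abs, abs_mul]
    exact mul_le_mul (hg1b q) (hB q).2.1 (abs_nonneg _) (by linarith)
  have iW2 : Integrable (fun q : ℝ => |g2 q * ξ0 q| * Real.exp (-θ * |q - q0|)) := by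
    refine intW hθ (hg2c.mul cξ).abs (C := ((1 + N) * B) * B) (fun q => ?_)
    rw [abs_abs, abs_mul]
    exact mul_le_mul (hg2b q) (hB q).1 (abs_nonneg _) (by nlinarith)
  have iQ : Integrable (fun q : ℝ =>
      (ξ0' q * ζ0 q + ξ0 q * ζ0' q) * Real.exp (-θ * |q - q0|)) := by
    refine intW hθ ((cξ'.mul cζ).add (cξ.mul cζ')) (C := 2 * (B * B)) (fun q => ?_)
    obtain ⟨h1, h2, h3, h4⟩ := hB q
    calc |ξ0' q * ζ0 q + ξ0 q * ζ0' q| ≤ |ξ0' q * ζ0 q| + |ξ0 q * ζ0' q| := abs_add_le _ _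
      _ ≤ 2 * (B * B) := by
        rw [abs_mul, abs_mul]
        nlinarith [abs_nonneg (ξ0' q), abs_nonneg (ξ0 q), abs_nonneg (ζ0 q), abs_nonneg (ζ0' q)]

  -- derivatives of the weights
  have hEtop : ∀ x : ℝ, HasDerivAt (fun q : ℝ => Real.exp (-θ * (q - q0)))
      (-θ * Real.exp (-θ * (x - q0))) x := by
    intro x
    have h := (((hasDerivAt_id x).sub_const q0).const_mul (-θ)).exp
    simpa [mul_comm] using h
  have hEbot : ∀ x : ℝ, HasDerivAt (fun q : ℝ => Real.exp (θ * (q - q0)))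
      (θ * Real.exp (θ * (x - q0))) x := by
    intro x
    have h := (((hasDerivAt_id x).sub_const q0).const_mul θ).exp
    simpa [mul_comm] using h
  have hF1 : ∀ x : ℝ, HasDerivAt (fun q : ℝ => ξ0 q * ζ0 q * Real.exp (-θ * (q - q0)))
      ((ξ0' x * ζ0 x + ξ0 x * ζ0' x - θ * (ξ0 x * ζ0 x)) * Real.exp (-θ * (x - q0))) x := by
    intro x
    have h := ((hξ x).mul (hζ x)).mul (hEtop x)
    refine h.congr_deriv ?_
    simp only [Pi.mul_apply]
    ring
  have hF2 : ∀ x : ℝ, HasDerivAt (fun q : ℝ => ξ0 q * ζ0 q * Real.exp (θ * (q - q0)))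
      ((ξ0' x * ζ0 x + ξ0 x * ζ0' x + θ * (ξ0 x * ζ0 x)) * Real.exp (θ * (x - q0))) x := by
    intro x
    have h := ((hξ x).mul (hζ x)).mul (hEbot x)
    refine h.congr_deriv ?_
    simp only [Pi.mul_apply]
    ring
  -- decay at infinity
  have hargTop : Tendsto (fun q : ℝ => -θ * (q - q0)) atTop atBot := by
    have h2 : Tendsto (fun q : ℝ => q - q0) atTop atTop := by
      simpa [sub_eq_add_neg] using tendsto_atTop_add_const_right atTop (-q0) tendsto_id
    have h3 : Tendsto (fun q : ℝ => θ * (q - q0)) atTop atTop := h2.const_mul_atTop hθ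
    have h4 : Tendsto (fun q : ℝ => -(θ * (q - q0))) atTop atBot :=
      tendsto_neg_atTop_atBot.comp h3
    exact Filter.Tendsto.congr (fun q => by ring) h4
  have hargBot : Tendsto (fun q : ℝ => θ * (q - q0)) atBot atBot := by
    have h2 : Tendsto (fun q : ℝ => q - q0) atBot atBot := by
      simpa [sub_eq_add_neg] using tendsto_atBot_add_const_right atBot (-q0) tendsto_id
    exact h2.const_mul_atBot hθ
  have htop : Tendsto (fun q : ℝ => ξ0 q * ζ0 q * Real.exp (-θ * (q - q0))) atTop (nhds 0) := by
    rw [tendsto_zero_iff_norm_tendsto_zero]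
    apply squeeze_zero (g := fun q : ℝ => B * B * Real.exp (-θ * (q - q0)))
      (fun q => norm_nonneg _)
    · intro q
      obtain ⟨b1, b2, _, _⟩ := hB q
      rw [Real.norm_eq_abs, abs_mul, abs_mul, abs_of_pos (Real.exp_pos _)]
      exact mul_le_mul_of_nonneg_right (mul_le_mul b1 b2 (abs_nonneg _) hB0) (Real.exp_pos _).le
    · have h5 : Tendsto (fun q : ℝ => Real.exp (-θ * (q - q0))) atTop (nhds 0) :=
        Real.tendsto_exp_atBot.comp hargTop
      simpa using h5.const_mul (B * B)
  have hbot : Tendsto (fun q : ℝ => ξ0 q * ζ0 q * Real.exp (θ * (q - q0))) atBot (nhds 0) := by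
    rw [tendsto_zero_iff_norm_tendsto_zero]
    apply squeeze_zero (g := fun q : ℝ => B * B * Real.exp (θ * (q - q0)))
      (fun q => norm_nonneg _)
    · intro q
      obtain ⟨b1, b2, _, _⟩ := hB q
      rw [Real.norm_eq_abs, abs_mul, abs_mul, abs_of_pos (Real.exp_pos _)]
      exact mul_le_mul_of_nonneg_right (mul_le_mul b1 b2 (abs_nonneg _) hB0) (Real.exp_pos _).le
    · have h5 : Tendsto (fun q : ℝ => Real.exp (θ * (q - q0))) atBot (nhds 0) :=
        Real.tendsto_exp_atBot.comp hargBot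
      simpa using h5.const_mul (B * B)
  -- integrability of the derivative integrands (in weight form)
  have iD1full : Integrable (fun q : ℝ =>
      (ξ0' q * ζ0 q + ξ0 q * ζ0' q - θ * (ξ0 q * ζ0 q)) * Real.exp (-θ * |q - q0|)) := by
    have heq : (fun q : ℝ =>
        (ξ0' q * ζ0 q + ξ0 q * ζ0' q - θ * (ξ0 q * ζ0 q)) * Real.exp (-θ * |q - q0|)) =
        fun q : ℝ => (ξ0' q * ζ0 q + ξ0 q * ζ0' q) * Real.exp (-θ * |q - q0|) -
          θ * ((ξ0 q * ζ0 q) * Real.exp (-θ * |q - q0|)) := funext fun q => by ring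
    rw [heq]
    exact iQ.sub (iR.const_mul θ)
  have iD2full : Integrable (fun q : ℝ =>
      (ξ0' q * ζ0 q + ξ0 q * ζ0' q + θ * (ξ0 q * ζ0 q)) * Real.exp (-θ * |q - q0|)) := by
    have heq : (fun q : ℝ =>
        (ξ0' q * ζ0 q + ξ0 q * ζ0' q + θ * (ξ0 q * ζ0 q)) * Real.exp (-θ * |q - q0|)) =
        fun q : ℝ => (ξ0' q * ζ0 q + ξ0 q * ζ0' q) * Real.exp (-θ * |q - q0|) +
          θ * ((ξ0 q * ζ0 q) * Real.exp (-θ * |q - q0|)) := funext fun q => by ring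
    rw [heq]
    exact iQ.add (iR.const_mul θ)
  -- integration by parts on (q0, ∞)
  have hIBP1 : (∫ q in Ioi q0,
      (ξ0' q * ζ0 q + ξ0 q * ζ0' q - θ * (ξ0 q * ζ0 q)) * Real.exp (-θ * |q - q0|))
      = -(ξ0 q0 * ζ0 q0) := by
    have hint : IntegrableOn (fun q : ℝ =>
        (ξ0' q * ζ0 q + ξ0 q * ζ0' q - θ * (ξ0 q * ζ0 q)) * Real.exp (-θ * (q - q0)))
        (Ioi q0) :=
      (iD1full.integrableOn).congr_fun
        (fun q hq => by dsimp only; rw [abs_of_pos (sub_pos.mpr hq)]) measurableSet_Ioi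
    have h1 := integral_Ioi_of_hasDerivAt_of_tendsto' (fun x _ => hF1 x) hint htop
    have h2 : (∫ q in Ioi q0,
        (ξ0' q * ζ0 q + ξ0 q * ζ0' q - θ * (ξ0 q * ζ0 q)) * Real.exp (-θ * |q - q0|))
        = ∫ q in Ioi q0,
        (ξ0' q * ζ0 q + ξ0 q * ζ0' q - θ * (ξ0 q * ζ0 q)) * Real.exp (-θ * (q - q0)) :=
      setIntegral_congr_fun measurableSet_Ioi
        (fun q hq => by rw [abs_of_pos (sub_pos.mpr hq)])
    rw [h2, h1]
    simp
  -- integration by parts on (-∞, q0]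
  have hIBP2 : (∫ q in Iic q0,
      (ξ0' q * ζ0 q + ξ0 q * ζ0' q + θ * (ξ0 q * ζ0 q)) * Real.exp (-θ * |q - q0|))
      = ξ0 q0 * ζ0 q0 := by
    have habs : ∀ q ∈ Iic q0, -θ * |q - q0| = θ * (q - q0) := by
      intro q hq
      rw [abs_of_nonpos (sub_nonpos.mpr hq)]
      ring
    have hint : IntegrableOn (fun q : ℝ =>
        (ξ0' q * ζ0 q + ξ0 q * ζ0' q + θ * (ξ0 q * ζ0 q)) * Real.exp (θ * (q - q0)))
        (Iic q0) :=
      (iD2full.integrableOn).congr_fun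
        (fun q hq => by dsimp only; rw [habs q hq]) measurableSet_Iic
    have h1 := integral_Iic_of_hasDerivAt_of_tendsto' (fun x _ => hF2 x) hint hbot
    have h2 : (∫ q in Iic q0,
        (ξ0' q * ζ0 q + ξ0 q * ζ0' q + θ * (ξ0 q * ζ0 q)) * Real.exp (-θ * |q - q0|))
        = ∫ q in Iic q0,
        (ξ0' q * ζ0 q + ξ0 q * ζ0' q + θ * (ξ0 q * ζ0 q)) * Real.exp (θ * (q - q0)) :=
      setIntegral_congr_fun measurableSet_Iic (fun q hq => by rw [habs q hq])
    rw [h2, h1]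
    simp
  -- decompose the two set integrals
  have hd1 : (∫ q in Ioi q0,
      (ξ0' q * ζ0 q + ξ0 q * ζ0' q - θ * (ξ0 q * ζ0 q)) * Real.exp (-θ * |q - q0|))
      = (∫ q in Ioi q0, (ξ0' q * ζ0 q + ξ0 q * ζ0' q) * Real.exp (-θ * |q - q0|))
        - θ * ∫ q in Ioi q0, (ξ0 q * ζ0 q) * Real.exp (-θ * |q - q0|) := by
    have i1 : Integrable (fun q : ℝ => θ * ((ξ0 q * ζ0 q) * Real.exp (-θ * |q - q0|))) :=
      iR.const_mul θ
    rw [← integral_const_mul, ← integral_sub iQ.integrableOn i1.integrableOn]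
    exact setIntegral_congr_fun measurableSet_Ioi (fun q _ => by ring)
  have hd2 : (∫ q in Iic q0,
      (ξ0' q * ζ0 q + ξ0 q * ζ0' q + θ * (ξ0 q * ζ0 q)) * Real.exp (-θ * |q - q0|))
      = (∫ q in Iic q0, (ξ0' q * ζ0 q + ξ0 q * ζ0' q) * Real.exp (-θ * |q - q0|))
        + θ * ∫ q in Iic q0, (ξ0 q * ζ0 q) * Real.exp (-θ * |q - q0|) := by
    have i1 : Integrable (fun q : ℝ => θ * ((ξ0 q * ζ0 q) * Real.exp (-θ * |q - q0|))) :=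
      iR.const_mul θ
    rw [← integral_const_mul, ← integral_add iQ.integrableOn i1.integrableOn]
    exact setIntegral_congr_fun measurableSet_Iic (fun q _ => by ring)
  have hsplitQ : (∫ q in Iic q0, (ξ0' q * ζ0 q + ξ0 q * ζ0' q) * Real.exp (-θ * |q - q0|))
      + (∫ q in Ioi q0, (ξ0' q * ζ0 q + ξ0 q * ζ0' q) * Real.exp (-θ * |q - q0|))
      = ∫ q : ℝ, (ξ0' q * ζ0 q + ξ0 q * ζ0' q) * Real.exp (-θ * |q - q0|) :=
    intervalIntegral.integral_Iic_add_Ioi iQ.integrableOn iQ.integrableOn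
  have hkey : (∫ q : ℝ, (ξ0' q * ζ0 q + ξ0 q * ζ0' q) * Real.exp (-θ * |q - q0|))
      = θ * (∫ q in Ioi q0, (ξ0 q * ζ0 q) * Real.exp (-θ * |q - q0|))
        - θ * ∫ q in Iic q0, (ξ0 q * ζ0 q) * Real.exp (-θ * |q - q0|) := by
    rw [hd1] at hIBP1
    rw [hd2] at hIBP2
    linarith [hsplitQ]
  -- decompose ∫ Q w using the equations
  have hQdecomp : (∫ q : ℝ, (ξ0' q * ζ0 q + ξ0 q * ζ0' q) * Real.exp (-θ * |q - q0|))
      = (∫ q : ℝ, ζ0 q ^ 2 * Real.exp (-θ * |q - q0|))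
        + (∫ q : ℝ, (g1 q * ζ0 q) * Real.exp (-θ * |q - q0|))
        + ((-ν) * (∫ q : ℝ, ξ0 q ^ 2 * Real.exp (-θ * |q - q0|))
          + ∫ q : ℝ, (g2 q * ξ0 q) * Real.exp (-θ * |q - q0|)) := by
    have h0 : (fun q : ℝ => (ξ0' q * ζ0 q + ξ0 q * ζ0' q) * Real.exp (-θ * |q - q0|)) =
        fun q : ℝ => (ζ0 q ^ 2 * Real.exp (-θ * |q - q0|)
          + (g1 q * ζ0 q) * Real.exp (-θ * |q - q0|))
          + ((-ν) * (ξ0 q ^ 2 * Real.exp (-θ * |q - q0|))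
            + (g2 q * ξ0 q) * Real.exp (-θ * |q - q0|)) :=
      funext fun q => by rw [eξ' q, eζ' q]; ring
    have i1 : Integrable (fun q : ℝ => ζ0 q ^ 2 * Real.exp (-θ * |q - q0|)
        + (g1 q * ζ0 q) * Real.exp (-θ * |q - q0|)) := iZ.add iA1
    have i2 : Integrable (fun q : ℝ => (-ν) * (ξ0 q ^ 2 * Real.exp (-θ * |q - q0|))
        + (g2 q * ξ0 q) * Real.exp (-θ * |q - q0|)) := (iX.const_mul (-ν)).add iA2
    rw [h0, integral_add i1 i2, integral_add iZ iA1, integral_add (iX.const_mul (-ν)) iA2,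
      integral_const_mul]
  -- absolute-value bounds
  have hA1b : -(∫ q : ℝ, (g1 q * ζ0 q) * Real.exp (-θ * |q - q0|))
      ≤ ∫ q : ℝ, |g1 q * ζ0 q| * Real.exp (-θ * |q - q0|) := by
    calc -(∫ q : ℝ, (g1 q * ζ0 q) * Real.exp (-θ * |q - q0|))
        ≤ |∫ q : ℝ, (g1 q * ζ0 q) * Real.exp (-θ * |q - q0|)| := neg_le_abs _
      _ ≤ ∫ q : ℝ, |(g1 q * ζ0 q) * Real.exp (-θ * |q - q0|)| := by
          simpa only [Real.norm_eq_abs] using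
            norm_integral_le_integral_norm (μ := volume)
              (fun q : ℝ => (g1 q * ζ0 q) * Real.exp (-θ * |q - q0|))
      _ = ∫ q : ℝ, |g1 q * ζ0 q| * Real.exp (-θ * |q - q0|) := by
          simp [abs_mul, Real.abs_exp]
  have hA2b : -(∫ q : ℝ, (g2 q * ξ0 q) * Real.exp (-θ * |q - q0|))
      ≤ ∫ q : ℝ, |g2 q * ξ0 q| * Real.exp (-θ * |q - q0|) := by
    calc -(∫ q : ℝ, (g2 q * ξ0 q) * Real.exp (-θ * |q - q0|))
        ≤ |∫ q : ℝ, (g2 q * ξ0 q) * Real.exp (-θ * |q - q0|)| := neg_le_abs _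
      _ ≤ ∫ q : ℝ, |(g2 q * ξ0 q) * Real.exp (-θ * |q - q0|)| := by
          simpa only [Real.norm_eq_abs] using
            norm_integral_le_integral_norm (μ := volume)
              (fun q : ℝ => (g2 q * ξ0 q) * Real.exp (-θ * |q - q0|))
      _ = ∫ q : ℝ, |g2 q * ξ0 q| * Real.exp (-θ * |q - q0|) := by
          simp [abs_mul, Real.abs_exp]
  have hRIoi : (∫ q in Ioi q0, (ξ0 q * ζ0 q) * Real.exp (-θ * |q - q0|))
      ≤ ∫ q in Ioi q0, |ξ0 q * ζ0 q| * Real.exp (-θ * |q - q0|) :=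
    setIntegral_mono_on iR.integrableOn iRabs.integrableOn measurableSet_Ioi
      (fun q _ => mul_le_mul_of_nonneg_right (le_abs_self _) (Real.exp_pos _).le)
  have hRIic : -(∫ q in Iic q0, (ξ0 q * ζ0 q) * Real.exp (-θ * |q - q0|))
      ≤ ∫ q in Iic q0, |ξ0 q * ζ0 q| * Real.exp (-θ * |q - q0|) := by
    rw [← integral_neg]
    refine setIntegral_mono_on iR.integrableOn.neg iRabs.integrableOn measurableSet_Iic
      (fun q _ => ?_)
    rw [show -((ξ0 q * ζ0 q) * Real.exp (-θ * |q - q0|))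
        = (-(ξ0 q * ζ0 q)) * Real.exp (-θ * |q - q0|) from by ring]
    exact mul_le_mul_of_nonneg_right (neg_le_abs _) (Real.exp_pos _).le
  have hsplitRabs : (∫ q in Iic q0, |ξ0 q * ζ0 q| * Real.exp (-θ * |q - q0|))
      + (∫ q in Ioi q0, |ξ0 q * ζ0 q| * Real.exp (-θ * |q - q0|))
      = ∫ q : ℝ, |ξ0 q * ζ0 q| * Real.exp (-θ * |q - q0|) :=
    intervalIntegral.integral_Iic_add_Ioi iRabs.integrableOn iRabs.integrableOn
  -- Young inequalities
  have hY3 : θ * (∫ q : ℝ, |ξ0 q * ζ0 q| * Real.exp (-θ * |q - q0|))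
      ≤ θ ^ 2 * (∫ q : ℝ, ξ0 q ^ 2 * Real.exp (-θ * |q - q0|))
        + (1 / 4) * ∫ q : ℝ, ζ0 q ^ 2 * Real.exp (-θ * |q - q0|) := by
    calc θ * (∫ q : ℝ, |ξ0 q * ζ0 q| * Real.exp (-θ * |q - q0|))
        = ∫ q : ℝ, θ * (|ξ0 q * ζ0 q| * Real.exp (-θ * |q - q0|)) :=
          (integral_const_mul θ _).symm
      _ ≤ ∫ q : ℝ, θ ^ 2 * (ξ0 q ^ 2 * Real.exp (-θ * |q - q0|))
            + (1 / 4) * (ζ0 q ^ 2 * Real.exp (-θ * |q - q0|)) := by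
          have i2 : Integrable (fun q : ℝ => θ ^ 2 * (ξ0 q ^ 2 * Real.exp (-θ * |q - q0|))
              + (1 / 4) * (ζ0 q ^ 2 * Real.exp (-θ * |q - q0|))) :=
            (iX.const_mul _).add (iZ.const_mul _)
          refine integral_mono (iRabs.const_mul θ) i2 (fun q => ?_)
          have h1 : θ * |ξ0 q * ζ0 q| ≤ θ ^ 2 * ξ0 q ^ 2 + (1 / 4) * ζ0 q ^ 2 := by
            rw [abs_mul]
            nlinarith [sq_nonneg (θ * |ξ0 q| - |ζ0 q| / 2), sq_abs (ξ0 q), sq_abs (ζ0 q),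
              abs_nonneg (ξ0 q), abs_nonneg (ζ0 q)]
          have h2 := mul_le_mul_of_nonneg_right h1 (Real.exp_pos (-θ * |q - q0|)).le
          nlinarith [h2]
      _ = θ ^ 2 * (∫ q : ℝ, ξ0 q ^ 2 * Real.exp (-θ * |q - q0|))
            + (1 / 4) * ∫ q : ℝ, ζ0 q ^ 2 * Real.exp (-θ * |q - q0|) := by
          rw [integral_add (iX.const_mul _) (iZ.const_mul _), integral_const_mul,
            integral_const_mul]
  have hW1 : (∫ q : ℝ, |g1 q * ζ0 q| * Real.exp (-θ * |q - q0|))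
      ≤ (∫ q : ℝ, g1 q ^ 2 * Real.exp (-θ * |q - q0|))
        + (1 / 4) * ∫ q : ℝ, ζ0 q ^ 2 * Real.exp (-θ * |q - q0|) := by
    calc (∫ q : ℝ, |g1 q * ζ0 q| * Real.exp (-θ * |q - q0|))
        ≤ ∫ q : ℝ, g1 q ^ 2 * Real.exp (-θ * |q - q0|)
            + (1 / 4) * (ζ0 q ^ 2 * Real.exp (-θ * |q - q0|)) := by
          have i2 : Integrable (fun q : ℝ => g1 q ^ 2 * Real.exp (-θ * |q - q0|)
              + (1 / 4) * (ζ0 q ^ 2 * Real.exp (-θ * |q - q0|))) :=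
            iG1.add (iZ.const_mul _)
          refine integral_mono iW1 i2 (fun q => ?_)
          have h1 : |g1 q * ζ0 q| ≤ g1 q ^ 2 + (1 / 4) * ζ0 q ^ 2 := by
            rw [abs_mul]
            nlinarith [sq_nonneg (|g1 q| - |ζ0 q| / 2), sq_abs (g1 q), sq_abs (ζ0 q),
              abs_nonneg (g1 q), abs_nonneg (ζ0 q)]
          have h2 := mul_le_mul_of_nonneg_right h1 (Real.exp_pos (-θ * |q - q0|)).le
          nlinarith [h2]
      _ = (∫ q : ℝ, g1 q ^ 2 * Real.exp (-θ * |q - q0|))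
            + (1 / 4) * ∫ q : ℝ, ζ0 q ^ 2 * Real.exp (-θ * |q - q0|) := by
          rw [integral_add iG1 (iZ.const_mul _), integral_const_mul]
  have hW2 : (∫ q : ℝ, |g2 q * ξ0 q| * Real.exp (-θ * |q - q0|))
      ≤ (1 / 2) * (∫ q : ℝ, ξ0 q ^ 2 * Real.exp (-θ * |q - q0|))
        + (1 / 2) * ∫ q : ℝ, g2 q ^ 2 * Real.exp (-θ * |q - q0|) := by
    calc (∫ q : ℝ, |g2 q * ξ0 q| * Real.exp (-θ * |q - q0|))
        ≤ ∫ q : ℝ, (1 / 2) * (ξ0 q ^ 2 * Real.exp (-θ * |q - q0|))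
            + (1 / 2) * (g2 q ^ 2 * Real.exp (-θ * |q - q0|)) := by
          have i2 : Integrable (fun q : ℝ => (1 / 2) * (ξ0 q ^ 2 * Real.exp (-θ * |q - q0|))
              + (1 / 2) * (g2 q ^ 2 * Real.exp (-θ * |q - q0|))) :=
            (iX.const_mul _).add (iG2.const_mul _)
          refine integral_mono iW2 i2 (fun q => ?_)
          have h1 : |g2 q * ξ0 q| ≤ (1 / 2) * ξ0 q ^ 2 + (1 / 2) * g2 q ^ 2 := by
            rw [abs_mul]
            nlinarith [sq_nonneg (|g2 q| - |ξ0 q|), sq_abs (g2 q), sq_abs (ξ0 q),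
              abs_nonneg (g2 q), abs_nonneg (ξ0 q)]
          have h2 := mul_le_mul_of_nonneg_right h1 (Real.exp_pos (-θ * |q - q0|)).le
          nlinarith [h2]
      _ = (1 / 2) * (∫ q : ℝ, ξ0 q ^ 2 * Real.exp (-θ * |q - q0|))
            + (1 / 2) * ∫ q : ℝ, g2 q ^ 2 * Real.exp (-θ * |q - q0|) := by
          rw [integral_add (iX.const_mul _) (iG2.const_mul _), integral_const_mul,
            integral_const_mul]
  -- nonnegativity
  have hX0 : 0 ≤ ∫ q : ℝ, ξ0 q ^ 2 * Real.exp (-θ * |q - q0|) :=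
    integral_nonneg fun q => mul_nonneg (sq_nonneg _) (Real.exp_pos _).le
  have hG10 : 0 ≤ ∫ q : ℝ, g1 q ^ 2 * Real.exp (-θ * |q - q0|) :=
    integral_nonneg fun q => mul_nonneg (sq_nonneg _) (Real.exp_pos _).le
  have hG20 : 0 ≤ ∫ q : ℝ, g2 q ^ 2 * Real.exp (-θ * |q - q0|) :=
    integral_nonneg fun q => mul_nonneg (sq_nonneg _) (Real.exp_pos _).le
  -- scalar multiples
  have hθRIoi := mul_le_mul_of_nonneg_left hRIoi hθ.le
  have hθRIic := mul_le_mul_of_nonneg_left hRIic hθ.le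
  have hsplit' : θ * (∫ q in Iic q0, |ξ0 q * ζ0 q| * Real.exp (-θ * |q - q0|))
      + θ * (∫ q in Ioi q0, |ξ0 q * ζ0 q| * Real.exp (-θ * |q - q0|))
      = θ * ∫ q : ℝ, |ξ0 q * ζ0 q| * Real.exp (-θ * |q - q0|) := by
    linear_combination θ * hsplitRabs
  have hθ2X : θ ^ 2 * (∫ q : ℝ, ξ0 q ^ 2 * Real.exp (-θ * |q - q0|))
      ≤ (1 / 16) * ∫ q : ℝ, ξ0 q ^ 2 * Real.exp (-θ * |q - q0|) := by
    have h1 : (0:ℝ) ≤ 1 / 16 - θ ^ 2 := by nlinarith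
    nlinarith [mul_nonneg h1 hX0]
  have hνX : ν * (∫ q : ℝ, ξ0 q ^ 2 * Real.exp (-θ * |q - q0|))
      ≤ N * ∫ q : ℝ, ξ0 q ^ 2 * Real.exp (-θ * |q - q0|) :=
    mul_le_mul_of_nonneg_right hνN hX0
  have hNX : 0 ≤ N * ∫ q : ℝ, ξ0 q ^ 2 * Real.exp (-θ * |q - q0|) := mul_nonneg hN.le hX0
  have hNG1 : 0 ≤ N * ∫ q : ℝ, g1 q ^ 2 * Real.exp (-θ * |q - q0|) := mul_nonneg hN.le hG10
  have hNG2 : 0 ≤ N * ∫ q : ℝ, g2 q ^ 2 * Real.exp (-θ * |q - q0|) := mul_nonneg hN.le hG20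
  linarith [hkey, hQdecomp, hA1b, hA2b, hθRIoi, hθRIic, hsplit', hY3, hW1, hW2, hθ2X, hνX,
    hNX, hNG1, hNG2]

/-- Lemma 5.5, first part (estimate of ζ₀ by ξ₀ and the data). -/
theorem statement13 :
    ∀ N : ℝ, 0 < N →
      ∃ C1 : ℝ, 0 < C1 ∧
        ∀ ν : ℝ, 0 < ν → ν ≤ N →
          ∀ ξ0 ζ0 ξ0' ζ0' g1 g2 : ℝ → ℝ,
            (∀ q : ℝ, HasDerivAt ξ0 (ξ0' q) q) →
            (∀ q : ℝ, HasDerivAt ζ0 (ζ0' q) q) →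
            (∃ B : ℝ, ∀ q : ℝ,
              |ξ0 q| ≤ B ∧ |ζ0 q| ≤ B ∧ |ξ0' q| ≤ B ∧ |ζ0' q| ≤ B) →
            Continuous g1 → Continuous g2 →
            (∀ q : ℝ, ξ0' q - ζ0 q = g1 q) →
            (∀ q : ℝ, ζ0' q + ν * ξ0 q = g2 q) →
            ∀ θ : ℝ, 0 < θ → θ ≤ 1 / 4 → ∀ q0 : ℝ,
              wn1 θ q0 ζ0 ≤
                C1 * (wn1 θ q0 ξ0 + wn1 θ q0 g1 + wn1 θ q0 g2) := by
  intro N hN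
  refine ⟨2 * N + 2, by linarith, ?_⟩
  intro ν hν hνN ξ0 ζ0 ξ0' ζ0' g1 g2 hξ hζ hBex hg1c hg2c he1 he2 θ hθ hθ4 q0
  obtain ⟨B, hB⟩ := hBex
  simp only [wn1]
  exact key_est N hN ν hν hνN ξ0 ζ0 ξ0' ζ0' g1 g2 hξ hζ B hB hg1c hg2c he1 he2 θ hθ hθ4 q0

end BL
end
end

section
/- Let μ be an eigenvalue of the Sturm–Liouville problem −(H_p^{−3} φ′)′ = μ H_p^{−1} φ on (0,1), φ(0) = 0, φ′(1) = H_p³(1) φ(1), whose eigenfunction φ (not identically zero) vanishes at some point p* ∈ (0,1). Then μ ≥ π² 𝔪 / 𝔐³, where 𝔪 = min_{[0,1]} H_p and 𝔐 = max_{[0,1]} H_p. In particular, the second eigenvalue μ₁ satisfies μ₁ ≥ π² 𝔪 / 𝔐³. -/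
noncomputable section
open MeasureTheory Set Filter Topology

namespace BL

section AuxiliaryLemmas

variable {ω : ℝ → ℝ} {lam : ℝ}

lemma om_continuousOn (hω : ContinuousOn ω (Icc 0 1)) :
    ContinuousOn (Om ω) (Icc (0:ℝ) 1) := by
  have h : IntegrableOn ω (uIcc (0:ℝ) 1) volume := by
    rw [uIcc_of_le zero_le_one]; exact hω.integrableOn_Icc
  have := intervalIntegral.continuousOn_primitive_interval (a := (0:ℝ)) (b := 1) h
  rwa [uIcc_of_le zero_le_one] at this

lemma sqrt_arg_pos (hω : ContinuousOn ω (Icc 0 1)) (hlam : lam0 ω < lam) :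
    ∀ p ∈ Icc (0:ℝ) 1, 0 < lam ^ 2 - 2 * Om ω p := by
  intro p hp
  have hbdd : BddAbove (Om ω '' Icc (0:ℝ) 1) :=
    (isCompact_Icc.image_of_continuousOn (om_continuousOn hω)).bddAbove
  have hle : Om ω p ≤ sSup (Om ω '' Icc (0:ℝ) 1) := le_csSup hbdd (mem_image_of_mem _ hp)
  have h00 : Om ω 0 = 0 := by simp [Om]
  have h0 : (0:ℝ) ≤ sSup (Om ω '' Icc (0:ℝ) 1) := by
    have := le_csSup hbdd (mem_image_of_mem (Om ω) (left_mem_Icc.2 zero_le_one))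
    rwa [h00] at this
  have hnn : (0:ℝ) ≤ 2 * sSup (Om ω '' Icc (0:ℝ) 1) := by linarith
  have hsq : 2 * sSup (Om ω '' Icc (0:ℝ) 1) < lam ^ 2 := by
    have h1 : Real.sqrt (2 * sSup (Om ω '' Icc (0:ℝ) 1)) < lam := hlam
    nlinarith [Real.sq_sqrt hnn, Real.sqrt_nonneg (2 * sSup (Om ω '' Icc (0:ℝ) 1))]
  linarith

lemma hp_pos (hω : ContinuousOn ω (Icc 0 1)) (hlam : lam0 ω < lam) :
    ∀ p ∈ Icc (0:ℝ) 1, 0 < Hp ω lam p := by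
  intro p hp
  exact inv_pos.2 (Real.sqrt_pos.2 (sqrt_arg_pos hω hlam p hp))

lemma hp_continuousOn (hω : ContinuousOn ω (Icc 0 1)) (hlam : lam0 ω < lam) :
    ContinuousOn (Hp ω lam) (Icc (0:ℝ) 1) := by
  apply ContinuousOn.inv₀
  · exact Real.continuous_sqrt.comp_continuousOn
      (continuousOn_const.sub (continuousOn_const.mul (om_continuousOn hω)))
  · intro p hp
    exact (Real.sqrt_pos.2 (sqrt_arg_pos hω hlam p hp)).ne'

lemma hp_inv_continuousOn (hω : ContinuousOn ω (Icc 0 1)) (hlam : lam0 ω < lam) :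
    ContinuousOn (fun p => (Hp ω lam p)⁻¹) (Icc (0:ℝ) 1) :=
  (hp_continuousOn hω hlam).inv₀ (fun p hp => (hp_pos hω hlam p hp).ne')

lemma m_le_hp (hω : ContinuousOn ω (Icc 0 1)) (hlam : lam0 ω < lam) {p : ℝ}
    (hp : p ∈ Icc (0:ℝ) 1) : sInf (Hp ω lam '' Icc (0:ℝ) 1) ≤ Hp ω lam p :=
  csInf_le (isCompact_Icc.image_of_continuousOn (hp_continuousOn hω hlam)).bddBelow
    (mem_image_of_mem _ hp)

lemma hp_le_M (hω : ContinuousOn ω (Icc 0 1)) (hlam : lam0 ω < lam) {p : ℝ}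
    (hp : p ∈ Icc (0:ℝ) 1) : Hp ω lam p ≤ sSup (Hp ω lam '' Icc (0:ℝ) 1) :=
  le_csSup (isCompact_Icc.image_of_continuousOn (hp_continuousOn hω hlam)).bddAbove
    (mem_image_of_mem _ hp)

lemma m_pos (hω : ContinuousOn ω (Icc 0 1)) (hlam : lam0 ω < lam) :
    0 < sInf (Hp ω lam '' Icc (0:ℝ) 1) := by
  have hne : (Hp ω lam '' Icc (0:ℝ) 1).Nonempty :=
    ⟨_, mem_image_of_mem _ (left_mem_Icc.2 zero_le_one)⟩
  have := (isCompact_Icc.image_of_continuousOn (hp_continuousOn hω hlam)).sInf_mem hne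
  obtain ⟨p, hp, hpe⟩ := this
  rw [← hpe]; exact hp_pos hω hlam p hp

lemma M_pos (hω : ContinuousOn ω (Icc 0 1)) (hlam : lam0 ω < lam) :
    0 < sSup (Hp ω lam '' Icc (0:ℝ) 1) :=
  lt_of_lt_of_le (m_pos hω hlam) ((m_le_hp hω hlam (left_mem_Icc.2 zero_le_one)).trans
    (hp_le_M hω hlam (left_mem_Icc.2 zero_le_one)))

lemma phi_continuousOn {μ : ℝ} {φ φ' : ℝ → ℝ} (he : EigenPair ω lam μ φ φ') :
    ContinuousOn φ (Icc (0:ℝ) 1) :=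
  fun p hp => (he.2.1 p hp).continuousWithinAt

lemma g_continuousOn {μ : ℝ} {φ φ' : ℝ → ℝ} (he : EigenPair ω lam μ φ φ') :
    ContinuousOn (fun t => (Hp ω lam t)⁻¹ ^ 3 * φ' t) (Icc (0:ℝ) 1) :=
  fun p hp => (he.2.2.1 p hp).continuousWithinAt

lemma phi'_continuousOn (hω : ContinuousOn ω (Icc 0 1)) (hlam : lam0 ω < lam)
    {μ : ℝ} {φ φ' : ℝ → ℝ} (he : EigenPair ω lam μ φ φ') :
    ContinuousOn φ' (Icc (0:ℝ) 1) := by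
  have h : ContinuousOn (fun t => Hp ω lam t ^ 3 * ((Hp ω lam t)⁻¹ ^ 3 * φ' t))
      (Icc (0:ℝ) 1) :=
    ((hp_continuousOn hω hlam).pow 3).mul (g_continuousOn he)
  apply h.congr
  intro p hp
  have h0 : Hp ω lam p ≠ 0 := (hp_pos hω hlam p hp).ne'
  field_simp

/-- Integration by parts identity on a subinterval with vanishing endpoints. -/
lemma ibp (hω : ContinuousOn ω (Icc 0 1)) (hlam : lam0 ω < lam)
    {μ : ℝ} {φ φ' : ℝ → ℝ} (he : EigenPair ω lam μ φ φ')
    {l r : ℝ} (hl : 0 ≤ l) (hr : r ≤ 1) (hlr : l ≤ r) (h0 : φ l = 0) (h1 : φ r = 0) :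
    μ * ∫ p in l..r, (Hp ω lam p)⁻¹ * φ p ^ 2
      = ∫ p in l..r, (Hp ω lam p)⁻¹ ^ 3 * φ' p ^ 2 := by
  have hsub : Icc l r ⊆ Icc (0:ℝ) 1 := Icc_subset_Icc hl hr
  set g := fun t => (Hp ω lam t)⁻¹ ^ 3 * φ' t with hg
  set G := fun t => g t * φ t with hG
  have hcontφ : ContinuousOn φ (Icc l r) := (phi_continuousOn he).mono hsub
  have hcontφ' : ContinuousOn φ' (Icc l r) := (phi'_continuousOn hω hlam he).mono hsub
  have hcontg : ContinuousOn g (Icc l r) := (g_continuousOn he).mono hsub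
  have hcontHinv : ContinuousOn (fun p => (Hp ω lam p)⁻¹) (Icc l r) :=
    (hp_inv_continuousOn hω hlam).mono hsub
  have hcontG : ContinuousOn G (Icc l r) := hcontg.mul hcontφ
  have hderiv : ∀ x ∈ Ioo l r, HasDerivWithinAt G
      (-(μ * (Hp ω lam x)⁻¹ * φ x) * φ x + g x * φ' x) (Ioi x) x := by
    intro x hx
    have hxI : x ∈ Icc (0:ℝ) 1 := hsub (Ioo_subset_Icc_self hx)
    have hxm : Icc (0:ℝ) 1 ∈ 𝓝 x :=
      Icc_mem_nhds (lt_of_le_of_lt hl hx.1) (lt_of_lt_of_le hx.2 hr)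
    have hφ : HasDerivAt φ (φ' x) x := (he.2.1 x hxI).hasDerivAt hxm
    have hgd : HasDerivAt g (-(μ * (Hp ω lam x)⁻¹ * φ x)) x :=
      (he.2.2.1 x hxI).hasDerivAt hxm
    exact ((hgd.mul hφ)).hasDerivWithinAt
  have hint : IntervalIntegrable
      (fun x => -(μ * (Hp ω lam x)⁻¹ * φ x) * φ x + g x * φ' x) volume l r := by
    apply ContinuousOn.intervalIntegrable
    rw [uIcc_of_le hlr]
    exact ((continuousOn_const.mul hcontHinv).mul hcontφ).neg.mul hcontφ |>.add
      (hcontg.mul hcontφ')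
  have key := intervalIntegral.integral_eq_sub_of_hasDeriv_right_of_le hlr hcontG hderiv hint
  have hGr : G r = 0 := by simp [hG, h1]
  have hGl : G l = 0 := by simp [hG, h0]
  rw [hGr, hGl, sub_zero] at key
  have hsplit : (fun x => -(μ * (Hp ω lam x)⁻¹ * φ x) * φ x + g x * φ' x)
      = fun x => (-μ) * ((Hp ω lam x)⁻¹ * φ x ^ 2) + (Hp ω lam x)⁻¹ ^ 3 * φ' x ^ 2 := by
    funext x; simp only [hg]; ring
  rw [hsplit] at key
  have hi1 : IntervalIntegrable (fun x => (-μ) * ((Hp ω lam x)⁻¹ * φ x ^ 2)) volume l r := by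
    apply ContinuousOn.intervalIntegrable
    rw [uIcc_of_le hlr]
    exact continuousOn_const.mul (hcontHinv.mul (hcontφ.pow 2))
  have hi2 : IntervalIntegrable (fun x => (Hp ω lam x)⁻¹ ^ 3 * φ' x ^ 2) volume l r := by
    apply ContinuousOn.intervalIntegrable
    rw [uIcc_of_le hlr]
    exact (hcontHinv.pow 3).mul (hcontφ'.pow 2)
  rw [intervalIntegral.integral_add hi1 hi2, intervalIntegral.integral_const_mul] at key
  linarith [key]

/-- Wirtinger's inequality on `[l, r]` for a `C¹` function vanishing at both endpoints. -/
lemma wirtinger {φ φ' : ℝ → ℝ} {l r : ℝ} (hlr : l < r)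
    (hd : ∀ p ∈ Icc l r, HasDerivWithinAt φ (φ' p) (Icc l r) p)
    (hφ' : ContinuousOn φ' (Icc l r))
    (h0 : φ l = 0) (h1 : φ r = 0) :
    (Real.pi / (r - l)) ^ 2 * ∫ p in l..r, φ p ^ 2 ≤ ∫ p in l..r, φ' p ^ 2 := by
  set L := r - l with hLdef
  have hL : 0 < L := sub_pos.2 hlr
  set k := Real.pi / L with hkdef
  have hk : 0 < k := div_pos Real.pi_pos hL
  have hkL : k * L = Real.pi := div_mul_cancel₀ _ hL.ne'
  have hcontφ : ContinuousOn φ (Icc l r) := fun p hp => (hd p hp).continuousWithinAt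
  set h := fun p => φ' p ^ 2 - k ^ 2 * φ p ^ 2 with hhdef
  have hconth : ContinuousOn h (Icc l r) := (hφ'.pow 2).sub (continuousOn_const.mul (hcontφ.pow 2))
  set P := fun x => ∫ p in l..x, h p with hPdef
  have hPc : ContinuousOn P (Icc l r) := by
    have : IntegrableOn h (uIcc l r) volume := by
      rw [uIcc_of_le hlr.le]; exact hconth.integrableOn_Icc
    have := intervalIntegral.continuousOn_primitive_interval this
    rwa [uIcc_of_le hlr.le] at this
  set c := fun p => k * (Real.cos (k * (p - l)) / Real.sin (k * (p - l))) with hcdef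
  set B := fun p => c p * φ p ^ 2 with hBdef
  have sinpos : ∀ x ∈ Ioo l r, 0 < Real.sin (k * (x - l)) := by
    intro x hx
    apply Real.sin_pos_of_pos_of_lt_pi
    · exact mul_pos hk (sub_pos.2 hx.1)
    · calc k * (x - l) < k * L := by
            apply mul_lt_mul_of_pos_left _ hk
            simp only [hLdef]; linarith [hx.2]
        _ = Real.pi := hkL
  -- derivative of B on the open interval
  have hderivB : ∀ x ∈ Ioo l r,
      HasDerivAt B (h x - (φ' x - c x * φ x) ^ 2) x := by
    intro x hx
    have hs : Real.sin (k * (x - l)) ≠ 0 := (sinpos x hx).ne'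
    have hφx : HasDerivAt φ (φ' x) x :=
      (hd x (Ioo_subset_Icc_self hx)).hasDerivAt (Icc_mem_nhds hx.1 hx.2)
    have hu : HasDerivAt (fun p : ℝ => k * (p - l)) k x := by
      simpa using (((hasDerivAt_id x).sub_const l).const_mul k)
    have hcos : HasDerivAt (fun p : ℝ => Real.cos (k * (p - l)))
        (-Real.sin (k * (x - l)) * k) x := (Real.hasDerivAt_cos _).comp x hu
    have hsin : HasDerivAt (fun p : ℝ => Real.sin (k * (p - l)))
        (Real.cos (k * (x - l)) * k) x := (Real.hasDerivAt_sin _).comp x hu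
    have hdiv := hcos.div hsin hs
    have hc : HasDerivAt c (k * ((-Real.sin (k * (x - l)) * k * Real.sin (k * (x - l)) -
        Real.cos (k * (x - l)) * (Real.cos (k * (x - l)) * k)) / Real.sin (k * (x - l)) ^ 2)) x :=
      hdiv.const_mul k
    have hφ2 : HasDerivAt (fun p => φ p ^ 2) (2 * φ x * φ' x) x := by
      have := hφx.fun_pow 2
      simpa [mul_comm] using this
    have hB := hc.fun_mul hφ2
    refine hB.congr_deriv ?_
    have hid := Real.sin_sq_add_cos_sq (k * (x - l))
    simp only [hhdef, hcdef]
    field_simp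
    ring_nf

  -- FTC on [l+ε, r-ε]
  have key : ∀ ε ∈ Ioo (0:ℝ) (L / 2), B (r - ε) - B (l + ε) ≤ P (r - ε) - P (l + ε) := by
    intro ε hε
    have hε0 : 0 < ε := hε.1
    have hεL : ε < L / 2 := hε.2
    have h1' : l < l + ε := by linarith
    have h2' : l + ε ≤ r - ε := by simp only [hLdef] at hεL ⊢; linarith
    have h3' : r - ε < r := by linarith
    have hsubset : Icc (l + ε) (r - ε) ⊆ Ioo l r := fun x hx => ⟨lt_of_lt_of_le h1' hx.1, lt_of_le_of_lt hx.2 h3'⟩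
    have hBc : ContinuousOn B (Icc (l + ε) (r - ε)) := fun x hx =>
      ((hderivB x (hsubset hx)).continuousAt).continuousWithinAt
    have hccont : ContinuousOn c (Icc (l + ε) (r - ε)) := by
      apply continuousOn_const.mul
      apply ContinuousOn.div
      · exact (Real.continuous_cos.comp (continuous_const.mul (continuous_id.sub continuous_const))).continuousOn
      · exact (Real.continuous_sin.comp (continuous_const.mul (continuous_id.sub continuous_const))).continuousOn
      · intro x hx; exact (sinpos x (hsubset hx)).ne'
    have hsq_cont : ContinuousOn (fun x => (φ' x - c x * φ x) ^ 2) (Icc (l + ε) (r - ε)) := by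
      apply ContinuousOn.pow
      exact (hφ'.mono (fun x hx => Ioo_subset_Icc_self (hsubset hx))).sub
        (hccont.mul (hcontφ.mono (fun x hx => Ioo_subset_Icc_self (hsubset hx))))
    have hDcont : ContinuousOn (fun x => h x - (φ' x - c x * φ x) ^ 2) (Icc (l + ε) (r - ε)) :=
      (hconth.mono (fun x hx => Ioo_subset_Icc_self (hsubset hx))).sub hsq_cont
    have hDint : IntervalIntegrable (fun x => h x - (φ' x - c x * φ x) ^ 2) volume (l + ε) (r - ε) := by
      apply ContinuousOn.intervalIntegrable; rwa [uIcc_of_le h2']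
    have ftc := intervalIntegral.integral_eq_sub_of_hasDeriv_right_of_le h2' hBc
      (fun x hx => (hderivB x (hsubset (Ioo_subset_Icc_self hx))).hasDerivWithinAt) hDint
    have hint_h : IntervalIntegrable h volume (l + ε) (r - ε) := by
      apply ContinuousOn.intervalIntegrable
      rw [uIcc_of_le h2']
      exact hconth.mono (fun x hx => Ioo_subset_Icc_self (hsubset hx))
    have hint_sq : IntervalIntegrable (fun x => (φ' x - c x * φ x) ^ 2) volume (l + ε) (r - ε) := by
      apply ContinuousOn.intervalIntegrable; rwa [uIcc_of_le h2']
    rw [intervalIntegral.integral_sub hint_h hint_sq] at ftc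
    have hsqnn : 0 ≤ ∫ x in (l+ε)..(r-ε), (φ' x - c x * φ x) ^ 2 :=
      intervalIntegral.integral_nonneg h2' (fun x _ => sq_nonneg _)
    have hPdiff : P (r - ε) - P (l + ε) = ∫ x in (l+ε)..(r-ε), h x := by
      have ha : IntervalIntegrable h volume l (r - ε) := by
        apply ContinuousOn.intervalIntegrable
        rw [uIcc_of_le (by linarith : l ≤ r - ε)]
        exact hconth.mono (Icc_subset_Icc le_rfl (by linarith))
      have hb : IntervalIntegrable h volume l (l + ε) := by
        apply ContinuousOn.intervalIntegrable
        rw [uIcc_of_le (by linarith : l ≤ l + ε)]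
        exact hconth.mono (Icc_subset_Icc le_rfl (by simp only [hLdef] at hεL ⊢; linarith))
      simpa [hPdef] using intervalIntegral.integral_interval_sub_left ha hb
    rw [hPdiff]
    linarith [ftc, hsqnn]
  -- limit of P-part
  have hPlim : Tendsto (fun ε => P (r - ε) - P (l + ε)) (𝓝[>] (0:ℝ)) (𝓝 (P r - P l)) := by
    have hmapr : Tendsto (fun ε : ℝ => r - ε) (𝓝[>] (0:ℝ)) (𝓝[Icc l r] r) := by
      apply tendsto_nhdsWithin_of_tendsto_nhds_of_eventually_within
      · have : Tendsto (fun ε : ℝ => r - ε) (𝓝 0) (𝓝 (r - 0)) :=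
          (continuous_const.sub continuous_id).tendsto 0
        simpa using this.mono_left nhdsWithin_le_nhds
      · filter_upwards [Ioo_mem_nhdsGT_of_mem (by constructor <;> [exact le_rfl; exact hL] : (0:ℝ) ∈ Ico 0 L)] with ε hε
        exact ⟨by linarith [hε.2], by linarith [hε.1]⟩
    have hmapl : Tendsto (fun ε : ℝ => l + ε) (𝓝[>] (0:ℝ)) (𝓝[Icc l r] l) := by
      apply tendsto_nhdsWithin_of_tendsto_nhds_of_eventually_within
      · have : Tendsto (fun ε : ℝ => l + ε) (𝓝 0) (𝓝 (l + 0)) :=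
          (continuous_const.add continuous_id).tendsto 0
        simpa using this.mono_left nhdsWithin_le_nhds
      · filter_upwards [Ioo_mem_nhdsGT_of_mem (by constructor <;> [exact le_rfl; exact hL] : (0:ℝ) ∈ Ico 0 L)] with ε hε
        exact ⟨by linarith [hε.1], by linarith [hε.2]⟩
    exact ((hPc r (right_mem_Icc.2 hlr.le)).tendsto.comp hmapr).sub
      ((hPc l (left_mem_Icc.2 hlr.le)).tendsto.comp hmapl)
  -- slope limits at the two endpoints
  have hIooL : Ioo (0:ℝ) (L/2) ∈ 𝓝[>] (0:ℝ) := Ioo_mem_nhdsGT_of_mem ⟨le_rfl, half_pos hL⟩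
  have hslopel : Tendsto (fun ε => φ (l + ε) / ε) (𝓝[>] (0:ℝ)) (𝓝 (φ' l)) := by
    have hsl := hasDerivWithinAt_iff_tendsto_slope.mp (hd l (left_mem_Icc.2 hlr.le))
    have hmap : Tendsto (fun ε : ℝ => l + ε) (𝓝[>] (0:ℝ)) (𝓝[Icc l r \ {l}] l) := by
      apply tendsto_nhdsWithin_of_tendsto_nhds_of_eventually_within
      · have : Tendsto (fun ε : ℝ => l + ε) (𝓝 0) (𝓝 (l + 0)) :=
          (continuous_const.add continuous_id).tendsto 0
        simpa using this.mono_left nhdsWithin_le_nhds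
      · filter_upwards [hIooL] with ε hε
        refine ⟨⟨by linarith [hε.1], by simp only [hLdef] at hε ⊢; linarith [hε.2]⟩, ?_⟩
        simp only [mem_singleton_iff]
        intro hcon; linarith [hε.1, congrArg (fun z => z - l) hcon]
    have := hsl.comp hmap
    apply this.congr'
    filter_upwards [hIooL] with ε hε
    simp only [Function.comp_apply, slope_def_field, h0]
    rw [div_eq_div_iff] <;> [skip; linarith [hε.1]; linarith [hε.1]]
    ring
  have hsloper : Tendsto (fun ε => (φ (r - ε) / ε) ^ 2) (𝓝[>] (0:ℝ)) (𝓝 ((φ' r) ^ 2)) := by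
    have hsl := hasDerivWithinAt_iff_tendsto_slope.mp (hd r (right_mem_Icc.2 hlr.le))
    have hmap : Tendsto (fun ε : ℝ => r - ε) (𝓝[>] (0:ℝ)) (𝓝[Icc l r \ {r}] r) := by
      apply tendsto_nhdsWithin_of_tendsto_nhds_of_eventually_within
      · have : Tendsto (fun ε : ℝ => r - ε) (𝓝 0) (𝓝 (r - 0)) :=
          (continuous_const.sub continuous_id).tendsto 0
        simpa using this.mono_left nhdsWithin_le_nhds
      · filter_upwards [hIooL] with ε hε
        refine ⟨⟨by simp only [hLdef] at hε ⊢; linarith [hε.2], by linarith [hε.1]⟩, ?_⟩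
        simp only [mem_singleton_iff]
        intro hcon; linarith [hε.1, congrArg (fun z => r - z) hcon]
    have hneg : Tendsto (fun ε => φ (r - ε) / (-ε)) (𝓝[>] (0:ℝ)) (𝓝 (φ' r)) := by
      have := hsl.comp hmap
      apply this.congr'
      filter_upwards [hIooL] with ε hε
      simp only [Function.comp_apply, slope_def_field, h1]
      rw [div_eq_div_iff] <;> [skip; linarith [hε.1]; linarith [hε.1]]
      ring
    have := hneg.pow 2
    have heq : (fun ε => (φ (r - ε) / (-ε)) ^ 2) = fun ε => (φ (r - ε) / ε) ^ 2 := by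
      funext ε; rw [div_neg, neg_sq]
    rwa [heq] at this
  -- x / sin x  → 1
  have hxsin : Tendsto (fun x => x / Real.sin x) (𝓝[>] (0:ℝ)) (𝓝 1) := by
    have hs : Tendsto (fun x => Real.sin x / x) (𝓝[>] (0:ℝ)) (𝓝 1) := by
      have h := hasDerivAt_iff_tendsto_slope.mp (Real.hasDerivAt_sin 0)
      rw [Real.cos_zero] at h
      have h2 := h.mono_left (nhdsWithin_mono 0 (fun x (hx : x ∈ Ioi (0:ℝ)) => ne_of_gt hx))
      apply h2.congr
      intro x; simp [slope_def_field]
    have := hs.inv₀ one_ne_zero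
    simpa [inv_div] using this
  have t0 : Tendsto (fun ε : ℝ => k * ε) (𝓝[>] (0:ℝ)) (𝓝[>] (0:ℝ)) := by
    apply tendsto_nhdsWithin_of_tendsto_nhds_of_eventually_within
    · have : Tendsto (fun ε : ℝ => k * ε) (𝓝 0) (𝓝 (k * 0)) := (continuous_const.mul continuous_id).tendsto 0
      simpa using this.mono_left nhdsWithin_le_nhds
    · filter_upwards [self_mem_nhdsWithin] with ε (hε : (0:ℝ) < ε)
      exact mul_pos hk hε
  have t1 : Tendsto (fun ε : ℝ => k * ε / Real.sin (k * ε)) (𝓝[>] (0:ℝ)) (𝓝 1) := hxsin.comp t0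
  have t2 : Tendsto (fun ε : ℝ => Real.cos (k * ε)) (𝓝[>] (0:ℝ)) (𝓝 1) := by
    have : Tendsto (fun ε : ℝ => Real.cos (k * ε)) (𝓝 0) (𝓝 (Real.cos (k * 0))) :=
      (Real.continuous_cos.comp (continuous_const.mul continuous_id)).tendsto 0
    simp only [mul_zero, Real.cos_zero] at this
    exact this.mono_left nhdsWithin_le_nhds
  have t4 : Tendsto (fun ε : ℝ => ε) (𝓝[>] (0:ℝ)) (𝓝 0) := tendsto_id.mono_left nhdsWithin_le_nhds
  have hsinkε : ∀ ε ∈ Ioo (0:ℝ) (L/2), 0 < Real.sin (k * ε) := by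
    intro ε hε
    apply Real.sin_pos_of_pos_of_lt_pi (mul_pos hk hε.1)
    have : k * ε < k * (L/2) := mul_lt_mul_of_pos_left hε.2 hk
    have : k * ε < Real.pi / 2 := by
      calc k * ε < k * (L/2) := mul_lt_mul_of_pos_left hε.2 hk
        _ = Real.pi / 2 := by rw [← hkL]; ring
    linarith [Real.pi_pos]
  -- B limits
  have hBl : Tendsto (fun ε => B (l + ε)) (𝓝[>] (0:ℝ)) (𝓝 0) := by
    have hT : Tendsto (fun ε : ℝ => k * ε / Real.sin (k * ε) * Real.cos (k * ε) *
        (φ (l + ε) / ε) ^ 2 * ε) (𝓝[>] (0:ℝ)) (𝓝 (1 * 1 * (φ' l) ^ 2 * 0)) :=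
      ((t1.mul t2).mul (hslopel.pow 2)).mul t4
    rw [show (1:ℝ) * 1 * (φ' l) ^ 2 * 0 = 0 by ring] at hT
    apply hT.congr'
    filter_upwards [hIooL] with ε hε
    have hs := (hsinkε ε hε).ne'
    have hε0 : (ε:ℝ) ≠ 0 := hε.1.ne'
    simp only [hBdef, hcdef, add_sub_cancel_left]
    field_simp [hε0, hs]
  have hBr : Tendsto (fun ε => B (r - ε)) (𝓝[>] (0:ℝ)) (𝓝 0) := by
    have hT : Tendsto (fun ε : ℝ => -(k * ε / Real.sin (k * ε) * Real.cos (k * ε) *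
        (φ (r - ε) / ε) ^ 2 * ε)) (𝓝[>] (0:ℝ)) (𝓝 (-(1 * 1 * (φ' r) ^ 2 * 0))) :=
      (((t1.mul t2).mul hsloper).mul t4).neg
    rw [show -((1:ℝ) * 1 * (φ' r) ^ 2 * 0) = 0 by ring] at hT
    apply hT.congr'
    filter_upwards [hIooL] with ε hε
    have hs := (hsinkε ε hε).ne'
    have harg : k * (r - ε - l) = Real.pi - k * ε := by
      have : r - ε - l = L - ε := by simp only [hLdef]; ring
      rw [this, mul_sub, hkL]
    have hε0 : (ε:ℝ) ≠ 0 := hε.1.ne'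
    simp only [hBdef, hcdef, harg, Real.sin_pi_sub, Real.cos_pi_sub]
    field_simp [hε0, hs]
  -- conclude
  have hfinal : (0:ℝ) ≤ P r - P l := by
    refine le_of_tendsto_of_tendsto (by simpa using hBr.sub hBl) hPlim ?_
    · filter_upwards [hIooL] with ε hε using key ε hε
  have hPl : P l = 0 := intervalIntegral.integral_same
  have hPr : P r = (∫ p in l..r, φ' p ^ 2) - k ^ 2 * ∫ p in l..r, φ p ^ 2 := by
    have hi1 : IntervalIntegrable (fun p => φ' p ^ 2) volume l r := by
      apply ContinuousOn.intervalIntegrable; rw [uIcc_of_le hlr.le]; exact hφ'.pow 2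
    have hi2 : IntervalIntegrable (fun p => k ^ 2 * φ p ^ 2) volume l r := by
      apply ContinuousOn.intervalIntegrable; rw [uIcc_of_le hlr.le]
      exact continuousOn_const.mul (hcontφ.pow 2)
    simp only [hPdef, hhdef]
    rw [intervalIntegral.integral_sub hi1 hi2, intervalIntegral.integral_const_mul]
  rw [hPl, hPr, sub_zero] at hfinal
  have : k ^ 2 * ∫ p in l..r, φ p ^ 2 ≤ ∫ p in l..r, φ' p ^ 2 := by linarith
  simpa only [hkdef, hLdef] using this

/-- Gronwall: a solution vanishing to first order at `r0` vanishes on `[r0, 1]`. -/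
lemma vanish_right (hω : ContinuousOn ω (Icc 0 1)) (hlam : lam0 ω < lam)
    {μ : ℝ} {φ φ' : ℝ → ℝ} (he : EigenPair ω lam μ φ φ')
    {r0 : ℝ} (hr00 : 0 ≤ r0) (hr01 : r0 ≤ 1) (hφ0 : φ r0 = 0) (hφ'0 : φ' r0 = 0) :
    ∀ p ∈ Icc r0 1, φ p = 0 := by
  set m := sInf (Hp ω lam '' Icc (0:ℝ) 1) with hm
  set M := sSup (Hp ω lam '' Icc (0:ℝ) 1) with hM
  have hmpos := m_pos hω hlam
  have hMpos := M_pos hω hlam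
  set g := fun t => (Hp ω lam t)⁻¹ ^ 3 * φ' t with hg
  set f : ℝ → ℝ × ℝ := fun p => (φ p, g p) with hf
  set f' : ℝ → ℝ × ℝ := fun p => (φ' p, -(μ * (Hp ω lam p)⁻¹ * φ p)) with hf'
  set K := max (M ^ 3) (|μ| * m⁻¹) with hK
  have hsub : Icc r0 1 ⊆ Icc (0:ℝ) 1 := Icc_subset_Icc hr00 le_rfl
  have hcont : ContinuousOn f (Icc r0 1) :=
    ((phi_continuousOn he).mono hsub).prodMk ((g_continuousOn he).mono hsub)
  have hderiv : ∀ x ∈ Ico r0 1, HasDerivWithinAt f (f' x) (Ici x) x := by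
    intro x hx
    have hxI : x ∈ Icc (0:ℝ) 1 := hsub (Ico_subset_Icc_self hx)
    have hmem : Icc x 1 ∈ 𝓝[≥] x := by
      rw [← nhdsWithin_Icc_eq_nhdsGE hx.2]
      exact self_mem_nhdsWithin
    have h1 : HasDerivWithinAt φ (φ' x) (Icc x 1) x :=
      (he.2.1 x hxI).mono (Icc_subset_Icc (le_trans hr00 hx.1) le_rfl)
    have h2 : HasDerivWithinAt g (-(μ * (Hp ω lam x)⁻¹ * φ x)) (Icc x 1) x :=
      (he.2.2.1 x hxI).mono (Icc_subset_Icc (le_trans hr00 hx.1) le_rfl)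
    exact (h1.mono_of_mem_nhdsWithin hmem).prodMk (h2.mono_of_mem_nhdsWithin hmem)
  have hbound : ∀ x ∈ Ico r0 1, ‖f' x‖ ≤ K * ‖f x‖ + 0 := by
    intro x hx
    have hxI : x ∈ Icc (0:ℝ) 1 := hsub (Ico_subset_Icc_self hx)
    have h0 : Hp ω lam x ≠ 0 := (hp_pos hω hlam x hxI).ne'
    have hφ'eq : φ' x = Hp ω lam x ^ 3 * g x := by
      simp only [hg]; field_simp
    have hHle : Hp ω lam x ≤ M := hp_le_M hω hlam hxI
    have hHpos : 0 < Hp ω lam x := hp_pos hω hlam x hxI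
    have hHinv : (Hp ω lam x)⁻¹ ≤ m⁻¹ :=
      inv_anti₀ hmpos (m_le_hp hω hlam hxI)
    have hnf : ‖f x‖ = max |φ x| |g x| := rfl
    have hnf' : ‖f' x‖ = max |φ' x| |(-(μ * (Hp ω lam x)⁻¹ * φ x))| := rfl
    rw [hnf', hnf, add_zero]
    apply max_le
    · calc |φ' x| = Hp ω lam x ^ 3 * |g x| := by
            rw [hφ'eq, abs_mul, abs_of_pos (pow_pos hHpos 3)]
        _ ≤ M ^ 3 * |g x| := by
            apply mul_le_mul_of_nonneg_right _ (abs_nonneg _)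
            exact pow_le_pow_left₀ hHpos.le hHle 3
        _ ≤ K * max |φ x| |g x| := by
            apply mul_le_mul (le_max_left _ _) (le_max_right _ _) (abs_nonneg _)
            exact le_trans (pow_pos hMpos 3).le (le_max_left _ _)
    · have hinvpos : (0:ℝ) < (Hp ω lam x)⁻¹ := inv_pos.2 hHpos
      calc |(-(μ * (Hp ω lam x)⁻¹ * φ x))| = |μ| * (Hp ω lam x)⁻¹ * |φ x| := by
            rw [abs_neg, abs_mul, abs_mul, abs_of_pos hinvpos]
        _ ≤ (|μ| * m⁻¹) * |φ x| := by
            apply mul_le_mul_of_nonneg_right _ (abs_nonneg _)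
            exact mul_le_mul_of_nonneg_left hHinv (abs_nonneg _)
        _ ≤ K * max |φ x| |g x| := by
            apply mul_le_mul (le_max_right _ _) (le_max_left _ _) (abs_nonneg _)
            positivity
  have hfa : ‖f r0‖ ≤ 0 := by
    have : f r0 = (0, 0) := by simp [hf, hg, hφ0, hφ'0]
    rw [this]; simp [Prod.norm_def]
  have := norm_le_gronwallBound_of_norm_deriv_right_le hcont hderiv hfa hbound
  intro p hp
  have hnp := this p hp
  rw [gronwallBound_ε0_δ0] at hnp
  have : ‖f p‖ = 0 := le_antisymm hnp (norm_nonneg _)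
  have hfp : f p = 0 := norm_eq_zero.mp this
  have := congrArg Prod.fst hfp
  simpa [hf] using this

/-- Orthogonality of eigenfunctions for distinct eigenvalues. -/
lemma orth (hω : ContinuousOn ω (Icc 0 1)) (hlam : lam0 ω < lam)
    {μ0 μ1 : ℝ} {φ0 φ0' φ1 φ1' : ℝ → ℝ}
    (he0 : EigenPair ω lam μ0 φ0 φ0') (he1 : EigenPair ω lam μ1 φ1 φ1')
    (hne : μ0 ≠ μ1) :
    ∫ p in (0:ℝ)..1, (Hp ω lam p)⁻¹ * (φ0 p * φ1 p) = 0 := by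
  set g0 := fun t => (Hp ω lam t)⁻¹ ^ 3 * φ0' t with hg0
  set g1 := fun t => (Hp ω lam t)⁻¹ ^ 3 * φ1' t with hg1
  set W := fun p => g1 p * φ0 p - g0 p * φ1 p with hW
  have hcontW : ContinuousOn W (Icc (0:ℝ) 1) :=
    ((g_continuousOn he1).mul (phi_continuousOn he0)).sub
      ((g_continuousOn he0).mul (phi_continuousOn he1))
  have hderiv : ∀ x ∈ Ioo (0:ℝ) 1, HasDerivWithinAt W
      ((μ0 - μ1) * ((Hp ω lam x)⁻¹ * (φ0 x * φ1 x))) (Ioi x) x := by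
    intro x hx
    have hxI : x ∈ Icc (0:ℝ) 1 := Ioo_subset_Icc_self hx
    have hmem : Icc (0:ℝ) 1 ∈ 𝓝 x := Icc_mem_nhds hx.1 hx.2
    have hφ0 : HasDerivAt φ0 (φ0' x) x := (he0.2.1 x hxI).hasDerivAt hmem
    have hφ1 : HasDerivAt φ1 (φ1' x) x := (he1.2.1 x hxI).hasDerivAt hmem
    have hg0d : HasDerivAt g0 (-(μ0 * (Hp ω lam x)⁻¹ * φ0 x)) x := (he0.2.2.1 x hxI).hasDerivAt hmem
    have hg1d : HasDerivAt g1 (-(μ1 * (Hp ω lam x)⁻¹ * φ1 x)) x := (he1.2.2.1 x hxI).hasDerivAt hmem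
    have hWd := (hg1d.mul hφ0).sub (hg0d.mul hφ1)
    have heq : -(μ1 * (Hp ω lam x)⁻¹ * φ1 x) * φ0 x + g1 x * φ0' x -
        (-(μ0 * (Hp ω lam x)⁻¹ * φ0 x) * φ1 x + g0 x * φ1' x)
        = (μ0 - μ1) * ((Hp ω lam x)⁻¹ * (φ0 x * φ1 x)) := by
      simp only [hg0, hg1]; ring
    rw [heq] at hWd
    exact hWd.hasDerivWithinAt
  have hint : IntervalIntegrable (fun x => (μ0 - μ1) * ((Hp ω lam x)⁻¹ * (φ0 x * φ1 x)))
      volume 0 1 := by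
    apply ContinuousOn.intervalIntegrable
    rw [uIcc_of_le zero_le_one]
    exact continuousOn_const.mul ((hp_inv_continuousOn hω hlam).mul
      ((phi_continuousOn he0).mul (phi_continuousOn he1)))
  have key := intervalIntegral.integral_eq_sub_of_hasDeriv_right_of_le zero_le_one hcontW hderiv hint
  have hW1 : W 1 = 0 := by
    have h0 : Hp ω lam 1 ≠ 0 :=
      (hp_pos hω hlam 1 (right_mem_Icc.2 zero_le_one)).ne'
    simp only [hW, hg0, hg1, he0.2.2.2.2, he1.2.2.2.2]
    field_simp
    ring
  have hW0 : W 0 = 0 := by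
    simp [hW, hg0, hg1, he0.2.2.2.1, he1.2.2.2.1]
  rw [hW1, hW0, sub_zero, intervalIntegral.integral_const_mul] at key
  have := sub_ne_zero.mpr hne
  exact (mul_eq_zero.mp key).resolve_left this

/-- A continuous function nonvanishing on `(0,1)` has constant sign there. -/
lemma sign_const {φ : ℝ → ℝ} (hc : ContinuousOn φ (Icc (0:ℝ) 1))
    (hno : ∀ p ∈ Ioo (0:ℝ) 1, φ p ≠ 0) :
    (∀ p ∈ Ioo (0:ℝ) 1, 0 < φ p) ∨ (∀ p ∈ Ioo (0:ℝ) 1, φ p < 0) := by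
  by_contra hcon
  push_neg at hcon
  obtain ⟨⟨a, ha, hfa⟩, ⟨b, hb, hfb⟩⟩ := hcon
  have hfa' : φ a < 0 := lt_of_le_of_ne hfa (hno a ha)
  have hfb' : 0 < φ b := lt_of_le_of_ne hfb (Ne.symm (hno b hb))
  have hsub : uIcc a b ⊆ Ioo (0:ℝ) 1 := by
    rw [uIcc_eq_union]
    exact union_subset (Icc_subset_Ioo ha.1 hb.2) (Icc_subset_Ioo hb.1 ha.2)
  have hcs : ContinuousOn φ (uIcc a b) :=
    hc.mono (fun x hx => Ioo_subset_Icc_self (hsub hx))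
  have := intermediate_value_uIcc hcs
  have h0m : (0:ℝ) ∈ uIcc (φ a) (φ b) := by
    rw [mem_uIcc]; left; exact ⟨hfa'.le, hfb'.le⟩
  obtain ⟨c, hc1, hc2⟩ := this h0m
  exact hno c (hsub hc1) hc2

/-- Positivity of ∫ φ² when φ is continuous and nonzero at an interior point. -/
lemma sq_integral_pos {φ : ℝ → ℝ} {l r q : ℝ} (hlr : l < r)
    (hc : ContinuousOn φ (Icc l r)) (hq : q ∈ Ioo l r) (hqne : φ q ≠ 0)
    (hnhds : Icc l r ∈ 𝓝 q) :
    0 < ∫ p in l..r, φ p ^ 2 := by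
  have hca : ContinuousAt (fun p => φ p ^ 2) q := ((hc.continuousAt hnhds).pow 2)
  have hpos : 0 < φ q ^ 2 := by positivity
  have hev : ∀ᶠ p in 𝓝 q, 0 < φ p ^ 2 :=
    continuousAt_const.eventually_lt hca hpos
  obtain ⟨δ, hδpos, hδ⟩ := Metric.eventually_nhds_iff.mp hev
  set δ' := min (δ/2) (min (q - l) (r - q)) with hδ'
  have hδ'pos : 0 < δ' := by
    apply lt_min (by linarith)
    exact lt_min (by linarith [hq.1]) (by linarith [hq.2])
  have hql : l ≤ q - δ' := by
    have : δ' ≤ q - l := le_trans (min_le_right _ _) (min_le_left _ _)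
    linarith
  have hqr : q + δ' ≤ r := by
    have : δ' ≤ r - q := le_trans (min_le_right _ _) (min_le_right _ _)
    linarith
  have hint : ∀ a b : ℝ, l ≤ a → a ≤ b → b ≤ r → IntervalIntegrable (fun p => φ p ^ 2) volume a b := by
    intro a b hla hab hbr
    apply ContinuousOn.intervalIntegrable
    refine (hc.pow 2).mono (fun x hx => ?_)
    rw [uIcc_of_le hab] at hx
    exact ⟨le_trans hla hx.1, le_trans hx.2 hbr⟩
  have hmid : 0 < ∫ p in (q - δ')..(q + δ'), φ p ^ 2 := by
    apply intervalIntegral.intervalIntegral_pos_of_pos_on (hint _ _ hql (by linarith) hqr)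
    · intro x hx
      apply hδ
      rw [Real.dist_eq, abs_lt]
      constructor
      · have := hx.1;
        have hd2 : δ' ≤ δ/2 := min_le_left _ _
        linarith
      · have := hx.2
        have hd2 : δ' ≤ δ/2 := min_le_left _ _
        linarith
    · linarith
  have hleft : 0 ≤ ∫ p in l..(q - δ'), φ p ^ 2 :=
    intervalIntegral.integral_nonneg hql (fun x _ => sq_nonneg _)
  have hright : 0 ≤ ∫ p in (q + δ')..r, φ p ^ 2 :=
    intervalIntegral.integral_nonneg hqr (fun x _ => sq_nonneg _)
  have hsplit1 : ∫ p in l..(q + δ'), φ p ^ 2 =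
      (∫ p in l..(q - δ'), φ p ^ 2) + ∫ p in (q - δ')..(q + δ'), φ p ^ 2 :=
    (intervalIntegral.integral_add_adjacent_intervals (hint _ _ le_rfl hql (by linarith))
      (hint _ _ hql (by linarith) hqr)).symm
  have hsplit2 : ∫ p in l..r, φ p ^ 2 =
      (∫ p in l..(q + δ'), φ p ^ 2) + ∫ p in (q + δ')..r, φ p ^ 2 :=
    (intervalIntegral.integral_add_adjacent_intervals (hint _ _ le_rfl (by linarith) hqr)
      (hint _ _ (by linarith) hqr le_rfl)).symm
  rw [hsplit2, hsplit1]
  linarith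

/-- The main eigenvalue lower bound when the endpoints vanish around a point where φ ≠ 0. -/
lemma caseA (hω : ContinuousOn ω (Icc 0 1)) (hlam : lam0 ω < lam)
    {μ : ℝ} {φ φ' : ℝ → ℝ} (he : EigenPair ω lam μ φ φ')
    {l r q : ℝ} (hl : 0 ≤ l) (hr : r ≤ 1) (hq : q ∈ Ioo l r)
    (h0 : φ l = 0) (h1 : φ r = 0) (hqne : φ q ≠ 0) :
    Real.pi ^ 2 * sInf (Hp ω lam '' Icc (0:ℝ) 1) / sSup (Hp ω lam '' Icc (0:ℝ) 1) ^ 3 ≤ μ := by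
  set m := sInf (Hp ω lam '' Icc (0:ℝ) 1) with hm
  set M := sSup (Hp ω lam '' Icc (0:ℝ) 1) with hM
  have hmpos := m_pos hω hlam
  have hMpos := M_pos hω hlam
  have hlr : l < r := hq.1.trans hq.2
  have hsub : Icc l r ⊆ Icc (0:ℝ) 1 := Icc_subset_Icc hl hr
  have hcontφ : ContinuousOn φ (Icc l r) := (phi_continuousOn he).mono hsub
  have hcontφ' : ContinuousOn φ' (Icc l r) := (phi'_continuousOn hω hlam he).mono hsub
  have hcontHinv : ContinuousOn (fun p => (Hp ω lam p)⁻¹) (Icc l r) :=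
    (hp_inv_continuousOn hω hlam).mono hsub
  have hd : ∀ p ∈ Icc l r, HasDerivWithinAt φ (φ' p) (Icc l r) p :=
    fun p hp => (he.2.1 p (hsub hp)).mono hsub
  have hw := wirtinger hlr hd hcontφ' h0 h1
  have hibp := ibp hω hlam he hl hr hlr.le h0 h1
  set A := ∫ p in l..r, φ p ^ 2 with hA
  set N := ∫ p in l..r, (Hp ω lam p)⁻¹ ^ 3 * φ' p ^ 2 with hN
  set D := ∫ p in l..r, (Hp ω lam p)⁻¹ * φ p ^ 2 with hD
  have hApos : 0 < A := sq_integral_pos hlr hcontφ hq hqne (Icc_mem_nhds hq.1 hq.2)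
  -- integrability facts
  have hint1 : IntervalIntegrable (fun p => (Hp ω lam p)⁻¹ ^ 3 * φ' p ^ 2) volume l r := by
    apply ContinuousOn.intervalIntegrable
    rw [uIcc_of_le hlr.le]
    exact (hcontHinv.pow 3).mul (hcontφ'.pow 2)
  have hint2 : IntervalIntegrable (fun p => (M⁻¹) ^ 3 * φ' p ^ 2) volume l r := by
    apply ContinuousOn.intervalIntegrable
    rw [uIcc_of_le hlr.le]
    exact continuousOn_const.mul (hcontφ'.pow 2)
  have hint3 : IntervalIntegrable (fun p => (Hp ω lam p)⁻¹ * φ p ^ 2) volume l r := by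
    apply ContinuousOn.intervalIntegrable
    rw [uIcc_of_le hlr.le]
    exact hcontHinv.mul (hcontφ.pow 2)
  have hint4 : IntervalIntegrable (fun p => m⁻¹ * φ p ^ 2) volume l r := by
    apply ContinuousOn.intervalIntegrable
    rw [uIcc_of_le hlr.le]
    exact continuousOn_const.mul (hcontφ.pow 2)
  have hint5 : IntervalIntegrable (fun p => (M⁻¹) * φ p ^ 2) volume l r := by
    apply ContinuousOn.intervalIntegrable
    rw [uIcc_of_le hlr.le]
    exact continuousOn_const.mul (hcontφ.pow 2)
  -- pointwise bounds
  have hNlow : M⁻¹ ^ 3 * (∫ p in l..r, φ' p ^ 2) ≤ N := by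
    rw [← intervalIntegral.integral_const_mul]
    apply intervalIntegral.integral_mono_on hlr.le hint2 hint1
    intro x hx
    apply mul_le_mul_of_nonneg_right _ (sq_nonneg _)
    apply pow_le_pow_left₀ (inv_pos.2 hMpos).le
    exact inv_anti₀ (hp_pos hω hlam x (hsub hx)) (hp_le_M hω hlam (hsub hx))
  have hDup : D ≤ m⁻¹ * A := by
    rw [hA, ← intervalIntegral.integral_const_mul]
    apply intervalIntegral.integral_mono_on hlr.le hint3 hint4
    intro x hx
    apply mul_le_mul_of_nonneg_right _ (sq_nonneg _)
    exact inv_anti₀ hmpos (m_le_hp hω hlam (hsub hx))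
  have hDlow : M⁻¹ * A ≤ D := by
    rw [hA, ← intervalIntegral.integral_const_mul]
    apply intervalIntegral.integral_mono_on hlr.le hint5 hint3
    intro x hx
    apply mul_le_mul_of_nonneg_right _ (sq_nonneg _)
    exact inv_anti₀ (hp_pos hω hlam x (hsub hx)) (hp_le_M hω hlam (hsub hx))
  have hDpos : 0 < D := lt_of_lt_of_le (by positivity) hDlow
  -- π² A ≤ (π/(r-l))² A ≤ ∫ φ'²
  have hrl1 : r - l ≤ 1 := by linarith
  have hrlpos : 0 < r - l := by linarith
  have hπ : Real.pi ≤ Real.pi / (r - l) := by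
    rw [le_div_iff₀ hrlpos]
    nlinarith [Real.pi_pos]
  have hπ2 : Real.pi ^ 2 ≤ (Real.pi / (r - l)) ^ 2 :=
    pow_le_pow_left₀ Real.pi_pos.le hπ 2
  have hchain1 : Real.pi ^ 2 * A ≤ ∫ p in l..r, φ' p ^ 2 :=
    le_trans (mul_le_mul_of_nonneg_right hπ2 hApos.le) hw
  -- final chain
  have hfin : Real.pi ^ 2 * m / M ^ 3 * D ≤ μ * D := by
    rw [hibp]
    calc Real.pi ^ 2 * m / M ^ 3 * D ≤ Real.pi ^ 2 * m / M ^ 3 * (m⁻¹ * A) := by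
          apply mul_le_mul_of_nonneg_left hDup
          positivity
      _ = M⁻¹ ^ 3 * (Real.pi ^ 2 * A) := by
          field_simp
          rw [div_mul_cancel_left₀ (show m ≠ 0 from hmpos.ne'), one_div]
      _ ≤ M⁻¹ ^ 3 * ∫ p in l..r, φ' p ^ 2 := by
          apply mul_le_mul_of_nonneg_left hchain1
          positivity
      _ ≤ N := hNlow
  exact le_of_mul_le_mul_right hfin hDpos

/-- First part: eigenvalues whose eigenfunction vanishes inside (0,1). -/
lemma part1 (hω : ContinuousOn ω (Icc 0 1)) (hlam : lam0 ω < lam)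
    {μ : ℝ} {φ φ' : ℝ → ℝ} (he : EigenPair ω lam μ φ φ')
    {pstar : ℝ} (hps : pstar ∈ Ioo (0:ℝ) 1) (hzero : φ pstar = 0) :
    Real.pi ^ 2 * sInf (Hp ω lam '' Icc (0:ℝ) 1) / sSup (Hp ω lam '' Icc (0:ℝ) 1) ^ 3 ≤ μ := by
  by_cases hA : ∃ l r q : ℝ, 0 ≤ l ∧ r ≤ 1 ∧ q ∈ Ioo l r ∧ φ l = 0 ∧ φ r = 0 ∧ φ q ≠ 0
  · obtain ⟨l, r, q, hl, hr, hq, h0, h1, hqne⟩ := hA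
    exact caseA hω hlam he hl hr hq h0 h1 hqne
  · exfalso
    set Z := Icc (0:ℝ) 1 ∩ φ ⁻¹' {0} with hZ
    have hZclosed : IsClosed Z :=
      (phi_continuousOn he).preimage_isClosed_of_isClosed isClosed_Icc isClosed_singleton
    have hZcompact : IsCompact Z :=
      isCompact_Icc.of_isClosed_subset hZclosed inter_subset_left
    have h0Z : (0:ℝ) ∈ Z := ⟨left_mem_Icc.2 zero_le_one, by simp [he.2.2.2.1]⟩
    have hpsZ : pstar ∈ Z := ⟨Ioo_subset_Icc_self hps, by simp [hzero]⟩
    set r0 := sSup Z with hr0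
    have hr0Z : r0 ∈ Z := hZcompact.sSup_mem ⟨0, h0Z⟩
    have hr0I : r0 ∈ Icc (0:ℝ) 1 := hr0Z.1
    have hφr0 : φ r0 = 0 := hr0Z.2
    have hub : ∀ p ∈ Z, p ≤ r0 := fun p hp => le_csSup hZcompact.bddAbove hp
    have hr0pos : 0 < r0 := lt_of_lt_of_le hps.1 (hub pstar hpsZ)
    -- φ vanishes on [0, r0]
    have hvan : ∀ t ∈ Icc (0:ℝ) r0, φ t = 0 := by
      intro t ht
      by_contra htne
      rcases lt_or_eq_of_le ht.2 with hlt | heq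
      · have htpos : 0 < t := by
          rcases lt_or_eq_of_le ht.1 with h | h
          · exact h
          · exfalso; exact htne (by rw [← h, he.2.2.2.1])
        exact hA ⟨0, r0, t, le_rfl, hr0I.2, ⟨htpos, hlt⟩, he.2.2.2.1, hφr0, htne⟩
      · exact htne (by rw [heq, hφr0])
    -- φ' r0 = 0
    have hφ'r0 : φ' r0 = 0 := by
      have hd1 : HasDerivWithinAt φ (φ' r0) (Icc 0 r0) r0 :=
        (he.2.1 r0 hr0I).mono (Icc_subset_Icc le_rfl hr0I.2)
      have hd2 : HasDerivWithinAt φ 0 (Icc 0 r0) r0 :=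
        (hasDerivWithinAt_const r0 (Icc 0 r0) (0:ℝ)).congr (fun y hy => hvan y hy) hφr0
      have hud : UniqueDiffWithinAt ℝ (Icc (0:ℝ) r0) r0 :=
        (uniqueDiffOn_Icc hr0pos) r0 (right_mem_Icc.2 hr0pos.le)
      have e1 := hd1.derivWithin hud
      have e2 := hd2.derivWithin hud
      rw [← e1, e2]
    -- contradiction with the point where φ ≠ 0
    obtain ⟨q, hqI, hqne⟩ := he.1
    have hq0 : φ q = 0 := by
      rcases le_total q r0 with h | h
      · exact hvan q ⟨hqI.1, h⟩
      · exact vanish_right hω hlam he hr0I.1 hr0I.2 hφr0 hφ'r0 q ⟨h, hqI.2⟩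
    exact hqne hq0


lemma part2 (hω : ContinuousOn ω (Icc 0 1)) (hlam : lam0 ω < lam)
    {μ0 μ1 : ℝ} (hl0 : IsLeast {μ : ℝ | IsEigen ω lam μ} μ0)
    (hl1 : IsLeast {μ : ℝ | IsEigen ω lam μ ∧ μ0 < μ} μ1) :
    Real.pi ^ 2 * sInf (Hp ω lam '' Icc (0:ℝ) 1) / sSup (Hp ω lam '' Icc (0:ℝ) 1) ^ 3 ≤ μ1 := by
  obtain ⟨φ0, φ0', he0⟩ := hl0.1
  obtain ⟨⟨φ1, φ1', he1⟩, hlt⟩ := hl1.1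
  by_cases hz1 : ∃ p ∈ Ioo (0:ℝ) 1, φ1 p = 0
  · obtain ⟨p, hp, hpz⟩ := hz1
    exact part1 hω hlam he1 hp hpz
  by_cases hz0 : ∃ p ∈ Ioo (0:ℝ) 1, φ0 p = 0
  · obtain ⟨p, hp, hpz⟩ := hz0
    exact le_of_lt (lt_of_le_of_lt (part1 hω hlam he0 hp hpz) hlt)
  exfalso
  push_neg at hz0 hz1
  have horth := orth hω hlam he0 he1 (ne_of_lt hlt)
  have habs : ∀ σ : ℝ, (∀ p ∈ Ioo (0:ℝ) 1, 0 < σ * ((Hp ω lam p)⁻¹ * (φ0 p * φ1 p))) → False := by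
    intro σ hpos
    have hint : IntervalIntegrable (fun p => σ * ((Hp ω lam p)⁻¹ * (φ0 p * φ1 p))) volume 0 1 := by
      apply ContinuousOn.intervalIntegrable
      rw [uIcc_of_le zero_le_one]
      exact continuousOn_const.mul ((hp_inv_continuousOn hω hlam).mul
        ((phi_continuousOn he0).mul (phi_continuousOn he1)))
    have hkey := intervalIntegral.intervalIntegral_pos_of_pos_on hint hpos zero_lt_one
    rw [intervalIntegral.integral_const_mul, horth, mul_zero] at hkey
    exact lt_irrefl 0 hkey
  have hs0 := sign_const (phi_continuousOn he0) hz0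
  have hs1 := sign_const (phi_continuousOn he1) hz1
  rcases hs0 with hp0 | hn0 <;> rcases hs1 with hp1 | hn1
  · apply habs 1
    intro p hp
    have hi := inv_pos.2 (hp_pos hω hlam p (Ioo_subset_Icc_self hp))
    have := mul_pos hi (mul_pos (hp0 p hp) (hp1 p hp)); linarith
  · apply habs (-1)
    intro p hp
    have hi := inv_pos.2 (hp_pos hω hlam p (Ioo_subset_Icc_self hp))
    have := mul_neg_of_pos_of_neg hi (mul_neg_of_pos_of_neg (hp0 p hp) (hn1 p hp)); linarith
  · apply habs (-1)
    intro p hp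
    have hi := inv_pos.2 (hp_pos hω hlam p (Ioo_subset_Icc_self hp))
    have := mul_neg_of_pos_of_neg hi (mul_neg_of_neg_of_pos (hn0 p hp) (hp1 p hp)); linarith
  · apply habs 1
    intro p hp
    have hi := inv_pos.2 (hp_pos hω hlam p (Ioo_subset_Icc_self hp))
    have := mul_pos hi (mul_pos_of_neg_of_neg (hn0 p hp) (hn1 p hp)); linarith

end AuxiliaryLemmas

/-- Section 3.2.1 (lower estimate for eigenvalues whose eigenfunctions vanish
inside (0,1); in particular for μ₁). -/
theorem statement18
    (ω : ℝ → ℝ) (K : NNReal) (hω : LipschitzOnWith K ω (Icc (0:ℝ) 1)) :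
    (∀ lam : ℝ, lam0 ω < lam →
      ∀ (μ : ℝ) (φ φ' : ℝ → ℝ), EigenPair ω lam μ φ φ' →
        ∀ pstar ∈ Ioo (0:ℝ) 1, φ pstar = 0 →
          Real.pi ^ 2 * sInf (Hp ω lam '' Icc (0:ℝ) 1) /
            sSup (Hp ω lam '' Icc (0:ℝ) 1) ^ 3 ≤ μ) ∧
    (∀ lam : ℝ, lam0 ω < lam →
      ∀ μ0 μ1 : ℝ, IsLeast {μ : ℝ | IsEigen ω lam μ} μ0 →
        IsLeast {μ : ℝ | IsEigen ω lam μ ∧ μ0 < μ} μ1 →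
          Real.pi ^ 2 * sInf (Hp ω lam '' Icc (0:ℝ) 1) /
            sSup (Hp ω lam '' Icc (0:ℝ) 1) ^ 3 ≤ μ1) := by
  constructor
  · intro lam hlam μ φ φ' he pstar hps hzero
    exact part1 hω.continuousOn hlam he hps hzero
  · intro lam hlam μ0 μ1 hl0 hl1
    exact part2 hω.continuousOn hlam hl0 hl1

end BL
end
end
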